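/- arXiv:1905.07990 — 8 statements merged into one kernel-verified Lean document; each statement's English description precedes it below -/
import Mathlib

section
/- Let d ≥ 1 and let A be a column-stochastic d×d real matrix. Then there exist a natural number D with 1 ≤ D ≤ d(d²−d+1), a probability vector q on Fin D, and a permutation π of Fin d × Fin D such that for all x, x' ∈ Fin d: A x x' = ∑_{y' ∈ Fin D, (π (x', y')).1 = x} q y'. Equivalently, in terms of the permutation matrix Π of π, A x x' = ∑_{y, y'} Π (x,y) (x',y') · q y' (classical Stinespring dilation: every stochastic matrix arises by marginalizing a permutation acting on the system tensored with a fixed ancilla probability vector). -/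
/-!
Column `x'` of `A` cuts `[0, 1]` into consecutive cells of lengths `A 0 x', A 1 x', …`, with
interior cut points the partial sums `s_{x'}(1), …, s_{x'}(d - 1)`. Sorting all `d (d - 1)` of
them, together with `0` and `1`, refines every column's partition into `N = d (d - 1) + 1`
(possibly empty) intervals `[t k, t (k + 1)]`; on each, the cell index `f k x'` of every column is
constant. Hence `A x x' = ∑ k, [f k x' = x] (t (k + 1) - t k)`: `A` is a mixture of `N`
deterministic maps. Such a mixture is dilated by the permutation `(x', a, k) ↦ (a + f k x', x', k)`
of `Fin d × Fin d × Fin N`, with the ancilla in state `a = 0` and `k` drawn with weight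
`t (k + 1) - t k`.
-/

open Finset

theorem min_sub_min_sub_min_sub_min_eq_sub {a b c e : ℝ} (hca : c ≤ a) (hab : a ≤ b)
    (hbe : b ≤ e) : min b e - min a e - (min b c - min a c) = b - a := by
  rw [min_eq_left hbe, min_eq_left (hab.trans hbe), min_eq_right (hca.trans hab),
    min_eq_right hca]
  ring

theorem min_sub_min_sub_min_sub_min_eq_zero {a b c e : ℝ} (hab : a ≤ b) (hce : c ≤ e)
    (h : b ≤ c ∨ e ≤ a) : min b e - min a e - (min b c - min a c) = 0 := by
  rcases h with h | h
  · rw [min_eq_left (h.trans hce), min_eq_left (hab.trans (h.trans hce)), min_eq_left h,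
      min_eq_left (hab.trans h)]
    ring
  · rw [min_eq_right (h.trans hab), min_eq_right h, min_eq_right ((hce.trans h).trans hab),
      min_eq_right (hce.trans h)]
    ring

section Quantile

variable {s : ℕ → ℝ} {n i : ℕ}

noncomputable def quantile (s : ℕ → ℝ) (n : ℕ) (u : ℝ) : ℕ :=
  Nat.findGreatest (fun i => s i ≤ u) n

theorem quantile_le (s : ℕ → ℝ) (n : ℕ) (u : ℝ) : quantile s n u ≤ n :=
  Nat.findGreatest_le n

theorem le_quantile_iff (hs : Monotone s) {u : ℝ} (hu : s 0 ≤ u) (hi : i ≤ n) :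
    i ≤ quantile s n u ↔ s i ≤ u :=
  ⟨fun h => (hs h).trans (Nat.findGreatest_spec (P := fun i => s i ≤ u) (Nat.zero_le n) hu),
    fun h => Nat.le_findGreatest (P := fun i => s i ≤ u) hi h⟩

-- The right side is the length of `[a, b] ∩ [s i, s (i + 1)]`, which telescopes in `a, b`.
theorem ite_quantile_eq {a b : ℝ} (hs : Monotone s) (hab : a ≤ b) (ha : s 0 ≤ a)
    (hb : b ≤ s (n + 1)) (hcut : ∀ j, 0 < j → j ≤ n → a < s j → b ≤ s j) (hi : i ≤ n) :
    (if quantile s n a = i then b - a else 0)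
      = min b (s (i + 1)) - min a (s (i + 1)) - (min b (s i) - min a (s i)) := by
  have hq := quantile_le s n a
  split_ifs with h
  · subst h
    have hsi : s (quantile s n a) ≤ a := (le_quantile_iff hs ha hi).1 le_rfl
    have hbs : b ≤ s (quantile s n a + 1) := by
      rcases hi.lt_or_eq with hlt | heq
      · have : ¬ s (quantile s n a + 1) ≤ a := fun h' =>
          Nat.not_succ_le_self _ ((le_quantile_iff hs ha hlt).2 h')
        exact hcut _ (Nat.succ_pos _) hlt (not_le.1 this)
      · rwa [heq]
    exact (min_sub_min_sub_min_sub_min_eq_sub hsi hab hbs).symm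
  · refine (min_sub_min_sub_min_sub_min_eq_zero hab (hs (Nat.le_succ i)) ?_).symm
    rcases lt_or_gt_of_ne h with hlt | hgt
    · refine .inl (hcut i (Nat.zero_lt_of_lt hlt) hi (not_le.1 fun h' => ?_))
      exact ((le_quantile_iff hs ha hi).2 h').not_gt hlt
    · exact .inr ((hs hgt).trans ((le_quantile_iff hs ha hq).1 le_rfl))

theorem sum_range_ite_quantile_eq {t : ℕ → ℝ} {N : ℕ} (hs : Monotone s) (ht : Monotone t)
    (ht0 : t 0 = s 0) (htN : t N = s (n + 1))
    (hcut : ∀ j, 0 < j → j ≤ n → s j ∈ Set.range t) (hi : i ≤ n) :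
    ∑ k ∈ range N, (if quantile s n (t k) = i then t (k + 1) - t k else 0) = s (i + 1) - s i := by
  have hterm : ∀ k ∈ range N, (if quantile s n (t k) = i then t (k + 1) - t k else 0)
      = min (t (k + 1)) (s (i + 1)) - min (t k) (s (i + 1))
        - (min (t (k + 1)) (s i) - min (t k) (s i)) := by
    intro k hk
    refine ite_quantile_eq hs (ht k.le_succ) (ht0 ▸ ht k.zero_le)
      (htN ▸ ht (mem_range.1 hk)) (fun j hj0 hjn hlt => not_lt.1 fun hgt => ?_) hi
    obtain ⟨m, hm⟩ := hcut j hj0 hjn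
    exact ht.ne_of_lt_of_lt_nat k hlt hgt m hm
  have hlow : ∀ j, t 0 ≤ s j := fun j => ht0 ▸ hs j.zero_le
  have hhigh : ∀ j ≤ n + 1, s j ≤ t N := fun j hj => htN ▸ hs hj
  rw [sum_congr rfl hterm, sum_sub_distrib, sum_range_sub (fun k => min (t k) (s (i + 1))),
    sum_range_sub (fun k => min (t k) (s i))]
  simp only [min_eq_right (hhigh _ (by omega : i + 1 ≤ n + 1)), min_eq_right (hhigh i (by omega)),
    min_eq_left (hlow _)]
  ring

end Quantile

section CumSum

variable {m : ℕ} (p : Fin m → ℝ)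

noncomputable def cumSum (j : ℕ) : ℝ :=
  ∑ i ∈ univ.filter (fun i : Fin m => (i : ℕ) < j), p i

@[simp]
theorem cumSum_zero : cumSum p 0 = 0 := by
  simp [cumSum]

theorem cumSum_of_le {j : ℕ} (hj : m ≤ j) : cumSum p j = ∑ i, p i :=
  sum_congr (filter_true_of_mem fun i _ => i.isLt.trans_le hj) fun _ _ => rfl

theorem cumSum_succ (i : Fin m) : cumSum p (i + 1) = cumSum p i + p i := by
  have : univ.filter (fun j : Fin m => (j : ℕ) < i + 1)
      = insert i (univ.filter fun j : Fin m => (j : ℕ) < i) := by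
    ext j
    simp only [mem_filter, mem_univ, true_and, mem_insert, Fin.ext_iff]
    omega
  rw [cumSum, this, sum_insert (by simp), add_comm]
  rfl

variable {p}

theorem monotone_cumSum (hp : ∀ i, 0 ≤ p i) : Monotone (cumSum p) :=
  fun _ _ hjk => sum_le_sum_of_subset_of_nonneg
    (monotone_filter_right _ fun _ _ h => lt_of_lt_of_le h hjk) fun i _ _ => hp i

end CumSum

theorem exists_monotone_grid {κ : Type*} [Fintype κ] (v : κ → ℝ) (hv0 : ∀ i, 0 ≤ v i)
    (hv1 : ∀ i, v i ≤ 1) :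
    ∃ t : ℕ → ℝ, Monotone t ∧ t 0 = 0 ∧ t (Fintype.card κ + 1) = 1 ∧ ∀ i, v i ∈ Set.range t := by
  set w := v ∘ (Fintype.equivFin κ).symm
  set σ := Tuple.sort w
  let t : ℕ → ℝ := fun k =>
    if k = 0 then 0 else if h : k - 1 < Fintype.card κ then w (σ ⟨k - 1, h⟩) else 1
  have ht0 : ∀ k, 0 ≤ t k := fun k => by
    dsimp only [t]; split_ifs <;> simp [w, hv0]
  have ht1 : ∀ k, t k ≤ 1 := fun k => by
    dsimp only [t]; split_ifs <;> simp [w, hv1]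
  refine ⟨t, fun a b hab => ?_, rfl, by simp [t], fun i => ?_⟩
  · by_cases ha : a = 0
    · simpa [t, ha] using ht0 b
    have hb0 : b ≠ 0 := by omega
    by_cases hb : b - 1 < Fintype.card κ
    · simp only [t, if_neg ha, if_neg hb0, dif_pos hb, dif_pos (by omega : a - 1 < Fintype.card κ)]
      exact Tuple.monotone_sort w (Fin.mk_le_mk.2 (by omega))
    · simpa [t, hb, hb0] using ht1 a
  · refine ⟨σ.symm (Fintype.equivFin κ i) + 1, ?_⟩
    have hlt := (σ.symm (Fintype.equivFin κ i)).isLt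
    simp only [t, Nat.add_one_ne_zero, if_false, Nat.add_sub_cancel, dif_pos hlt, Fin.eta,
      Equiv.apply_symm_apply, w, Function.comp_apply, Equiv.symm_apply_apply]

theorem exists_eq_sum_deterministic_of_stochastic {ι : Type*} [Fintype ι] {n : ℕ}
    (A : Fin (n + 1) → ι → ℝ) (hA_nonneg : ∀ x x', 0 ≤ A x x') (hA_col : ∀ x', ∑ x, A x x' = 1) :
    ∃ (w : Fin (Fintype.card ι * n + 1) → ℝ) (f : Fin (Fintype.card ι * n + 1) → ι → Fin (n + 1)),
      (∀ k, 0 ≤ w k) ∧ ∑ k, w k = 1 ∧ ∀ x x', A x x' = ∑ k, if f k x' = x then w k else 0 := by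
  set s : ι → ℕ → ℝ := fun x' => cumSum (A · x')
  have hs : ∀ x', Monotone (s x') := fun x' => monotone_cumSum fun x => hA_nonneg x x'
  have hs_zero : ∀ x', s x' 0 = 0 := fun x' => cumSum_zero _
  have hs_top : ∀ x', s x' (n + 1) = 1 := fun x' => (cumSum_of_le _ le_rfl).trans (hA_col x')
  obtain ⟨t, ht, ht0, htN, hgrid⟩ := exists_monotone_grid (fun c : ι × Fin n => s c.1 (c.2 + 1))
    (fun c => hs_zero c.1 ▸ hs c.1 (Nat.zero_le _))
    (fun c => hs_top c.1 ▸ hs c.1 (by omega))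
  rw [Fintype.card_prod, Fintype.card_fin] at htN
  refine ⟨fun k => t (k + 1) - t k,
    fun k x' => ⟨quantile (s x') n (t k), Nat.lt_succ_of_le (quantile_le _ _ _)⟩,
    fun k => sub_nonneg.2 (ht (Nat.le_succ _)), ?_, fun x x' => ?_⟩
  · rw [Fin.sum_univ_eq_sum_range (fun k => t (k + 1) - t k), sum_range_sub, htN, ht0, sub_zero]
  · simp only [Fin.ext_iff]
    rw [Fin.sum_univ_eq_sum_range
      (fun k => if quantile (s x') n (t k) = x then t (k + 1) - t k else 0),
      sum_range_ite_quantile_eq (hs x') ht (ht0.trans (hs_zero x').symm)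
        (htN.trans (hs_top x').symm) (fun j hj0 hjn => ?_) (Nat.le_of_lt_succ x.isLt),
      show s x' (x + 1) = s x' x + A x x' from cumSum_succ _ x]
    · ring
    · simpa [Nat.sub_add_cancel hj0] using hgrid (x', ⟨j - 1, by omega⟩)

section Dilation

variable {α β γ : Type*} [Fintype β] [Fintype γ] [DecidableEq α]

noncomputable def marginalMatrix (π : Equiv.Perm (α × β)) (q : β → ℝ) (x x' : α) : ℝ :=
  ∑ y ∈ univ.filter (fun y => (π (x', y)).1 = x), q y

theorem marginalMatrix_permCongr (π : Equiv.Perm (α × β)) (e : β ≃ γ) (q : β → ℝ) :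
    marginalMatrix ((Equiv.prodCongr (Equiv.refl α) e).permCongr π) (q ∘ e.symm)
      = marginalMatrix π q := by
  ext x x'
  simp only [marginalMatrix, sum_filter]
  exact Fintype.sum_equiv e.symm _ _ fun y => by simp [Equiv.permCongr_apply]

variable {G K : Type*} [AddGroup G]

def shiftPerm (f : K → G → G) : Equiv.Perm (G × G × K) where
  toFun p := (p.2.1 + f p.2.2 p.1, p.1, p.2.2)
  invFun p := (p.2.1, p.1 - f p.2.2 p.2.1, p.2.2)
  left_inv p := by simp
  right_inv p := by simp

theorem marginalMatrix_shiftPerm [Fintype G] [DecidableEq G] [Fintype K] (f : K → G → G)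
    (w : K → ℝ) (x x' : G) :
    marginalMatrix (shiftPerm f) (fun y => if y.1 = 0 then w y.2 else 0) x x'
      = ∑ k, if f k x' = x then w k else 0 := by
  simp only [marginalMatrix, sum_filter, Fintype.sum_prod_type]
  rw [Fintype.sum_eq_single 0 fun a ha => sum_eq_zero fun k _ => by simp [ha]]
  simp [shiftPerm]

end Dilation

/-- Classical Stinespring dilation: every column-stochastic matrix arises by
marginalizing a permutation acting on the system tensored with a fixed ancilla
probability vector, with ancilla dimension at most `d * (d^2 - d + 1)`. -/
theorem classical_stinespring (d : ℕ) (hd : 1 ≤ d) (A : Fin d → Fin d → ℝ)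
    (hA_nonneg : ∀ x x', 0 ≤ A x x')
    (hA_col : ∀ x', ∑ x, A x x' = 1) :
    ∃ D : ℕ, 1 ≤ D ∧ D ≤ d * (d ^ 2 - d + 1) ∧
      ∃ (q : Fin D → ℝ) (π : Equiv.Perm (Fin d × Fin D)),
        (∀ y, 0 ≤ q y) ∧ (∑ y, q y = 1) ∧
        ∀ x x' : Fin d,
          A x x' = ∑ y' ∈ Finset.univ.filter (fun y' : Fin D => (π (x', y')).1 = x), q y' := by
  obtain ⟨n, rfl⟩ : ∃ n, d = n + 1 := ⟨d - 1, by omega⟩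
  obtain ⟨w, f, hw_nonneg, hw_sum, hA⟩ :=
    exists_eq_sum_deterministic_of_stochastic A hA_nonneg hA_col
  let e := finProdFinEquiv (m := n + 1) (n := Fintype.card (Fin (n + 1)) * n + 1)
  let q : Fin (n + 1) × Fin (Fintype.card (Fin (n + 1)) * n + 1) → ℝ :=
    fun y => if y.1 = 0 then w y.2 else 0
  refine ⟨_, Nat.mul_pos n.succ_pos (Nat.succ_pos _), ?_, q ∘ e.symm,
    (Equiv.prodCongr (Equiv.refl _) e).permCongr (shiftPerm f), fun y => ?_, ?_, fun x x' => ?_⟩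
  · rw [Fintype.card_fin, Nat.sub_eq_of_eq_add (by ring : (n + 1) ^ 2 = (n + 1) * n + (n + 1))]
  · simp only [Function.comp_apply, q]
    split_ifs
    exacts [hw_nonneg _, le_rfl]
  · rw [Function.comp_def, Equiv.sum_comp e.symm q, Fintype.sum_prod_type,
      Fintype.sum_eq_single 0 fun a ha => by simp [q, ha]]
    simpa [q] using hw_sum
  · rw [hA, ← marginalMatrix_shiftPerm f w]
    exact congrFun (congrFun (marginalMatrix_permCongr (shiftPerm f) e q).symm x) x'
end

section
/- Let d ≥ 1 and let A be a column-stochastic d×d real matrix. Then there exist D with 1 ≤ D ≤ d(d²−d+1), a probability vector q on Fin D, and a permutation π of Fin d × Fin D such that: (i) A x x' = ∑_{y' : (π (x', y')).1 = x} q y' for all x, x'; and (ii) for every finite type R and every family of d×d matrices A(r), r ∈ R, with A(r) x x' ≥ 0 for all entries and ∑_r A(r) = A, there exists a family B : R → Fin D → ℝ with B r y ≥ 0 and ∑_r B r y = 1 for every y (a 'bare measurement' on the ancilla), such that for all r, x, x': A(r) x x' = ∑_{y' ∈ Fin D, (π (x', y')).1 = x} B r ((π (x', y')).2) · q y'. The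 same π and q serve in (i) and (ii) simultaneously. -/
open Finset

private lemma piece_aux (a b u v : ℝ) (P : Prop) [Decidable P]
    (hab : a ≤ b) (huv : u ≤ v)
    (h1 : P → a ≤ u ∧ v ≤ b)
    (h2 : ¬P → v ≤ a ∨ b ≤ u ∨ u = v) :
    (if P then v - u else 0)
      = (min v b - min v a) - (min u b - min u a) := by
  by_cases hP : P
  · obtain ⟨h1a, h1b⟩ := h1 hP
    rw [if_pos hP, min_eq_left h1b, min_eq_right (h1a.trans huv),
      min_eq_left (huv.trans h1b), min_eq_right h1a]
    ring
  · rw [if_neg hP]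
    rcases h2 hP with h | h | h
    · rw [min_eq_left (h.trans hab), min_eq_left h,
        min_eq_left ((huv.trans h).trans hab), min_eq_left (huv.trans h)]
      ring
    · rw [min_eq_right (h.trans huv), min_eq_right (hab.trans (h.trans huv)),
        min_eq_right h, min_eq_right (hab.trans h)]
      ring
    · rw [h]; ring

/-- Classical Stinespring dilation together with the representation of an arbitrary
control-operation decomposition of `A` as a bare measurement on the ancilla,
with the same permutation and ancilla state serving for all decompositions. -/
theorem classical_stinespring_with_instruments (d : ℕ) (hd : 1 ≤ d)
    (A : Fin d → Fin d → ℝ)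
    (hA_nonneg : ∀ x x', 0 ≤ A x x')
    (hA_col : ∀ x', ∑ x, A x x' = 1) :
    ∃ D : ℕ, 1 ≤ D ∧ D ≤ d * (d ^ 2 - d + 1) ∧
      ∃ (q : Fin D → ℝ) (π : Equiv.Perm (Fin d × Fin D)),
        (∀ y, 0 ≤ q y) ∧ (∑ y, q y = 1) ∧
        (∀ x x' : Fin d,
          A x x' = ∑ y' ∈ Finset.univ.filter (fun y' : Fin D => (π (x', y')).1 = x), q y') ∧
        (∀ (R : Type) [Fintype R] (Ar : R → Fin d → Fin d → ℝ),
          (∀ r x x', 0 ≤ Ar r x x') →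
          (∀ x x', ∑ r, Ar r x x' = A x x') →
          ∃ B : R → Fin D → ℝ,
            (∀ r y, 0 ≤ B r y) ∧ (∀ y, ∑ r, B r y = 1) ∧
            ∀ (r : R) (x x' : Fin d),
              Ar r x x' =
                ∑ y' ∈ Finset.univ.filter (fun y' : Fin D => (π (x', y')).1 = x),
                  B r ((π (x', y')).2) * q y') := by
  classical
  have hd0 : 0 < d := hd
  have hdR : (0:ℝ) < d := by exact_mod_cast hd0
  set D0 : ℕ := d ^ 2 - d + 1 with hD0def
  have hD0pos : 0 < D0 := by rw [hD0def]; exact Nat.succ_pos _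
  -- cumulative column sums
  set S : Fin d → ℕ → ℝ := fun x' k => ∑ x : Fin d, if (x : ℕ) < k then A x x' else 0
    with hSdef
  have hS0 : ∀ x', S x' 0 = 0 := by intro x'; simp [hSdef]
  have hSd : ∀ x', S x' d = 1 := by
    intro x'
    rw [hSdef, ← hA_col x']
    exact Finset.sum_congr rfl (fun x _ => if_pos x.isLt)
  have hS_nonneg : ∀ x' k, 0 ≤ S x' k := by
    intro x' k
    apply Finset.sum_nonneg
    intro x _
    split
    · exact hA_nonneg x x'
    · exact le_refl 0
  have hS_mono : ∀ x', Monotone (S x') := by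
    intro x' k l hkl
    apply Finset.sum_le_sum
    intro x _
    split_ifs with h1 h2
    · exact le_refl _
    · exact absurd (lt_of_lt_of_le h1 hkl) h2
    · exact hA_nonneg x x'
    · exact le_refl 0
  have hS_succ : ∀ (x x' : Fin d), S x' ((x:ℕ)+1) = S x' (x:ℕ) + A x x' := by
    intro x x'
    have step : ∀ x'' : Fin d,
        (if (x'':ℕ) < (x:ℕ)+1 then A x'' x' else 0)
          = (if (x'':ℕ) < (x:ℕ) then A x'' x' else 0)
            + (if x'' = x then A x'' x' else 0) := by
      intro x''
      simp only [Fin.ext_iff]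
      split_ifs <;> first | (exfalso; omega) | ring1
    rw [hSdef]
    calc (∑ x'' : Fin d, if (x'':ℕ) < (x:ℕ)+1 then A x'' x' else 0)
        = ∑ x'' : Fin d, ((if (x'':ℕ) < (x:ℕ) then A x'' x' else 0)
            + (if x'' = x then A x'' x' else 0)) :=
          Finset.sum_congr rfl (fun x'' _ => step x'')
      _ = (∑ x'' : Fin d, if (x'':ℕ) < (x:ℕ) then A x'' x' else 0)
            + ∑ x'' : Fin d, (if x'' = x then A x'' x' else 0) :=
          Finset.sum_add_distrib
      _ = S x' (x:ℕ) + A x x' := by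
          rw [Finset.sum_ite_eq' Finset.univ x (fun x'' => A x'' x')]
          simp [hSdef]
  -- breakpoint set
  set T : Finset ℝ :=
      Finset.image (fun p : Fin d × ℕ => S p.1 p.2) (Finset.univ ×ˢ Finset.range (d+1))
    with hTdef
  have hT_mem : ∀ (x' : Fin d) (k : ℕ), k ≤ d → S x' k ∈ T := by
    intro x' k hk
    exact Finset.mem_image.mpr ⟨(x', k),
      Finset.mem_product.mpr ⟨Finset.mem_univ _, Finset.mem_range.mpr (by omega)⟩, rfl⟩
  have h0T : (0:ℝ) ∈ T := by
    have := hT_mem ⟨0, hd0⟩ 0 (Nat.zero_le d); rwa [hS0] at this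
  have h1T : (1:ℝ) ∈ T := by
    have := hT_mem ⟨0, hd0⟩ d le_rfl; rwa [hSd] at this
  have hT_nonneg : ∀ c ∈ T, (0:ℝ) ≤ c := by
    intro c hc
    obtain ⟨⟨x', k⟩, _, rfl⟩ := Finset.mem_image.mp hc
    exact hS_nonneg x' k
  have hT_le1 : ∀ c ∈ T, c ≤ 1 := by
    intro c hc
    obtain ⟨⟨x', k⟩, hmem, rfl⟩ := Finset.mem_image.mp hc
    obtain ⟨-, hk⟩ := Finset.mem_product.mp hmem
    rw [Finset.mem_range] at hk
    calc S x' k ≤ S x' d := hS_mono x' (by omega)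
      _ = 1 := hSd x'
  set n : ℕ := T.card with hn
  have hn_pos : 0 < n := Finset.card_pos.mpr ⟨0, h0T⟩
  set en : Fin n ≃o {x // x ∈ T} := T.orderIsoOfFin hn.symm with hendef
  set t : ℕ → ℝ := fun j => if h : j < n then (en ⟨j, h⟩ : ℝ) else 1 with htdef
  have htT : ∀ (j : ℕ) (h : j < n), t j ∈ T := by
    intro j h
    simp only [htdef]
    rw [dif_pos h]
    exact (en ⟨j, h⟩).2
  have ht_le1 : ∀ j, t j ≤ 1 := by
    intro j
    by_cases h : j < n
    · exact hT_le1 _ (htT j h)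
    · simp only [htdef]; rw [dif_neg h]
  have ht_nonneg : ∀ j, 0 ≤ t j := by
    intro j
    by_cases h : j < n
    · exact hT_nonneg _ (htT j h)
    · simp only [htdef]; rw [dif_neg h]; norm_num
  have ht_mono : Monotone t := by
    apply monotone_nat_of_le_succ
    intro j
    by_cases h1 : j + 1 < n
    · have hj : j < n := by omega
      simp only [htdef]
      rw [dif_pos hj, dif_pos h1]
      exact Subtype.coe_le_coe.mpr (en.le_iff_le.mpr (by simp [Fin.mk_le_mk]))
    · by_cases hj : j < n
      · have := hT_le1 _ (htT j hj)
        simp only [htdef] at this ⊢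
        rw [dif_neg h1]
        rw [dif_pos hj] at this ⊢
        exact this
      · simp only [htdef]; rw [dif_neg hj, dif_neg h1]
  have ht0_le : ∀ c ∈ T, t 0 ≤ c := by
    intro c hc
    simp only [htdef]
    rw [dif_pos hn_pos]
    have hck : c = (en (en.symm ⟨c, hc⟩) : ℝ) := by simp
    rw [hck]
    exact Subtype.coe_le_coe.mpr (en.le_iff_le.mpr (by simp [Fin.le_def]))
  have ht0 : t 0 = 0 := le_antisymm (ht0_le 0 h0T) (ht_nonneg 0)
  have hF1 : ∀ (j : ℕ), ∀ c ∈ T, c ≤ t j ∨ t (j+1) ≤ c := by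
    intro j c hc
    by_cases hcj : c ≤ t j
    · exact Or.inl hcj
    · push_neg at hcj
      right
      by_cases hj : j < n
      · have hck : c = (en (en.symm ⟨c, hc⟩) : ℝ) := by simp
        have hjk : (⟨j, hj⟩ : Fin n) < en.symm ⟨c, hc⟩ := by
          rw [← en.lt_iff_lt]
          refine Subtype.coe_lt_coe.mp ?_
          simp only [htdef] at hcj
          rw [dif_pos hj] at hcj
          rw [hck] at hcj
          exact hcj
        have hkn : ((en.symm ⟨c, hc⟩ : Fin n) : ℕ) < n := (en.symm ⟨c, hc⟩).isLt
        have hj1 : j + 1 < n := by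
          have h2 : j < ((en.symm ⟨c, hc⟩ : Fin n) : ℕ) := Fin.lt_def.mp hjk
          omega
        simp only [htdef]
        rw [dif_pos hj1, hck]
        refine Subtype.coe_le_coe.mpr (en.le_iff_le.mpr ?_)
        rw [Fin.le_def]
        exact Fin.lt_def.mp hjk
      · exfalso
        have h1 : t j = 1 := by simp only [htdef]; rw [dif_neg hj]
        have := hT_le1 c hc
        rw [h1] at hcj
        linarith
  -- cardinality bound
  have hsub : T ⊆ insert (0:ℝ) (insert 1
      (((Finset.univ : Finset (Fin d)) ×ˢ Finset.Ico 1 d).image (fun p : Fin d × ℕ => S p.1 p.2))) := by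
    intro c hc
    obtain ⟨⟨x', k⟩, hmem, rfl⟩ := Finset.mem_image.mp hc
    obtain ⟨-, hk⟩ := Finset.mem_product.mp hmem
    rw [Finset.mem_range] at hk
    rcases Nat.eq_zero_or_pos k with hk0 | hkpos
    · subst hk0
      rw [hS0]
      exact Finset.mem_insert_self _ _
    · rcases eq_or_lt_of_le (Nat.lt_succ_iff.mp hk) with hkd | hkd
      · rw [hkd, hSd]
        exact Finset.mem_insert_of_mem (Finset.mem_insert_self _ _)
      · refine Finset.mem_insert_of_mem (Finset.mem_insert_of_mem ?_)
        exact Finset.mem_image.mpr ⟨(x', k),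
          Finset.mem_product.mpr ⟨Finset.mem_univ _, Finset.mem_Ico.mpr ⟨hkpos, hkd⟩⟩, rfl⟩
  have hcard2 : n ≤ d * (d - 1) + 2 := by
    have hc1 := Finset.card_le_card hsub
    have hc2 := Finset.card_insert_le (0:ℝ) (insert 1
      (((Finset.univ : Finset (Fin d)) ×ˢ Finset.Ico 1 d).image (fun p : Fin d × ℕ => S p.1 p.2)))
    have hc3 := Finset.card_insert_le (1:ℝ)
      (((Finset.univ : Finset (Fin d)) ×ˢ Finset.Ico 1 d).image (fun p : Fin d × ℕ => S p.1 p.2))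
    have hc4 := Finset.card_image_le (s := Finset.univ ×ˢ Finset.Ico 1 d)
      (f := fun p : Fin d × ℕ => S p.1 p.2)
    have hc5 : ((Finset.univ : Finset (Fin d)) ×ˢ Finset.Ico 1 d).card = d * (d - 1) := by
      rw [Finset.card_product, Finset.card_univ, Fintype.card_fin, Nat.card_Ico]
    rw [hn]
    omega
  have hnD0 : n ≤ D0 + 1 := by
    have hdd : d * (d - 1) + d = d * d := by
      cases d with
      | zero => simp
      | succ k => simp [Nat.succ_sub_one]; ring
    have hsq : d ^ 2 = d * d := pow_two d
    rw [hD0def, hsq]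
    omega
  have htD0_ge : ∀ c ∈ T, c ≤ t D0 := by
    intro c hc
    by_cases h : D0 < n
    · simp only [htdef]
      rw [dif_pos h]
      have hck : c = (en (en.symm ⟨c, hc⟩) : ℝ) := by simp
      rw [hck]
      refine Subtype.coe_le_coe.mpr (en.le_iff_le.mpr ?_)
      rw [Fin.le_def]
      show ((en.symm ⟨c, hc⟩ : Fin n) : ℕ) ≤ D0
      have := (en.symm ⟨c, hc⟩).isLt
      omega
    · simp only [htdef]
      rw [dif_neg h]
      exact hT_le1 c hc
  have htD0_1 : t D0 = 1 := le_antisymm (ht_le1 _) (htD0_ge 1 h1T)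
  -- masses
  set m : ℕ → ℝ := fun j => t (j+1) - t j with hmdef
  have hm_nonneg : ∀ j, 0 ≤ m j := fun j => sub_nonneg.mpr (ht_mono (Nat.le_succ j))
  have hm_sum : ∑ j ∈ Finset.range D0, m j = 1 := by
    simp only [hmdef]
    rw [Finset.sum_range_sub t D0, ht0, htD0_1, sub_zero]
  -- level function
  have hne : ∀ (x' : Fin d) (j : ℕ),
      (Finset.univ.filter (fun x : Fin d => S x' (x:ℕ) ≤ t j)).Nonempty := by
    intro x' j
    refine ⟨⟨0, hd0⟩, Finset.mem_filter.mpr ⟨Finset.mem_univ _, ?_⟩⟩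
    show S x' ((0:ℕ)) ≤ t j
    rw [hS0]
    exact ht_nonneg j
  set f : Fin d → ℕ → Fin d :=
      fun x' j => (Finset.univ.filter (fun x : Fin d => S x' (x:ℕ) ≤ t j)).max' (hne x' j)
    with hfdef
  have hf_le : ∀ x' j, S x' ((f x' j : Fin d) : ℕ) ≤ t j := by
    intro x' j
    have := (Finset.univ.filter (fun x : Fin d => S x' (x:ℕ) ≤ t j)).max'_mem (hne x' j)
    exact (Finset.mem_filter.mp this).2
  have hf_max : ∀ x' j (x : Fin d), S x' (x:ℕ) ≤ t j → x ≤ f x' j := by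
    intro x' j x hx
    exact Finset.le_max' _ x (Finset.mem_filter.mpr ⟨Finset.mem_univ _, hx⟩)
  -- key telescoping identity
  have key : ∀ x x' : Fin d,
      (∑ j ∈ Finset.range D0, if f x' j = x then m j else 0) = A x x' := by
    intro x x'
    have haT : S x' (x:ℕ) ∈ T := hT_mem x' (x:ℕ) (le_of_lt x.isLt)
    have hbT : S x' ((x:ℕ)+1) ∈ T := hT_mem x' ((x:ℕ)+1) x.isLt
    have hab : S x' (x:ℕ) ≤ S x' ((x:ℕ)+1) := hS_mono x' (Nat.le_succ _)
    have hG : ∀ j, (if f x' j = x then m j else 0)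
        = ((min (t (j+1)) (S x' ((x:ℕ)+1)) - min (t (j+1)) (S x' (x:ℕ)))
          - (min (t j) (S x' ((x:ℕ)+1)) - min (t j) (S x' (x:ℕ)))) := by
      intro j
      refine piece_aux _ _ _ _ _ hab (ht_mono (Nat.le_succ j)) ?_ ?_
      · intro hP
        constructor
        · rw [← hP]; exact hf_le x' j
        · rcases hF1 j _ hbT with hb | hb
          · by_cases hxd : (x:ℕ) + 1 < d
            · exfalso
              have hle : (⟨(x:ℕ)+1, hxd⟩ : Fin d) ≤ f x' j := hf_max x' j _ hb
              rw [hP] at hle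
              have := Fin.le_def.mp hle
              simp at this
            · have hxe : (x:ℕ) + 1 = d := by have := x.isLt; omega
              rw [hxe, hSd]
              exact ht_le1 _
          · exact hb
      · intro hP
        by_cases ha : S x' (x:ℕ) ≤ t j
        · right; left
          have hxlt : x < f x' j := lt_of_le_of_ne (hf_max x' j x ha) (fun h => hP h.symm)
          calc S x' ((x:ℕ)+1) ≤ S x' ((f x' j : Fin d) : ℕ) :=
                hS_mono x' (Fin.lt_def.mp hxlt)
            _ ≤ t j := hf_le x' j
        · left
          rcases hF1 j _ haT with h | h
          · exact absurd h ha
          · exact h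
    calc (∑ j ∈ Finset.range D0, if f x' j = x then m j else 0)
        = ∑ j ∈ Finset.range D0,
            ((fun j => min (t j) (S x' ((x:ℕ)+1)) - min (t j) (S x' (x:ℕ))) (j+1)
              - (fun j => min (t j) (S x' ((x:ℕ)+1)) - min (t j) (S x' (x:ℕ))) j) :=
          Finset.sum_congr rfl (fun j _ => hG j)
      _ = (min (t D0) (S x' ((x:ℕ)+1)) - min (t D0) (S x' (x:ℕ)))
            - (min (t 0) (S x' ((x:ℕ)+1)) - min (t 0) (S x' (x:ℕ))) :=
          Finset.sum_range_sub
            (fun j => min (t j) (S x' ((x:ℕ)+1)) - min (t j) (S x' (x:ℕ))) D0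
      _ = A x x' := by
          rw [min_eq_right (htD0_ge _ hbT), min_eq_right (htD0_ge _ haT),
            min_eq_left (ht0_le _ hbT), min_eq_left (ht0_le _ haT)]
          have := hS_succ x x'
          linarith
  -- Fin indexed versions
  set F : Fin d → Fin D0 → Fin d := fun x' j => f x' (j : ℕ) with hFdef
  have keyF : ∀ x x' : Fin d,
      (∑ j : Fin D0, if F x' j = x then m (j:ℕ) else 0) = A x x' := by
    intro x x'
    have h0 : (∑ j : Fin D0, (fun jn => if f x' jn = x then m jn else 0) ((j : Fin D0) : ℕ))
        = ∑ jn ∈ Finset.range D0, (fun jn => if f x' jn = x then m jn else 0) jn :=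
      Fin.sum_univ_eq_sum_range (fun jn => if f x' jn = x then m jn else 0) D0
    exact h0.trans (key x x')
  set z0 : Fin d := ⟨0, hd0⟩ with hz0def
  set π₀ : Equiv.Perm (Fin d × (Fin d × Fin D0)) :=
    { toFun := fun p => (Equiv.swap z0 (F p.1 p.2.2) p.2.1, (p.1, p.2.2)),
      invFun := fun p => (p.2.1, (Equiv.swap z0 (F p.2.1 p.2.2) p.1, p.2.2)),
      left_inv := by rintro ⟨x', k, j⟩; simp,
      right_inv := by rintro ⟨a, x', j⟩; simp } with hπ₀def
  set e : Fin d × Fin D0 ≃ Fin (d * D0) := finProdFinEquiv with hedef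
  set q : Fin (d * D0) → ℝ :=
    fun y => if (e.symm y).1 = z0 then m (((e.symm y).2 : Fin D0) : ℕ) else 0 with hqdef
  set c : Fin d × (Fin d × Fin D0) ≃ Fin d × Fin (d * D0) :=
    (Equiv.refl (Fin d)).prodCongr e with hcdef
  set π : Equiv.Perm (Fin d × Fin (d * D0)) := (c.symm.trans π₀).trans c with hπdef
  have hπ_eval : ∀ (x' : Fin d) (p : Fin d × Fin D0),
      π (x', e p) = (Equiv.swap z0 (F x' p.2) p.1, e (x', p.2)) := by
    intro x' p
    have h1 : c.symm (x', e p) = (x', p) := by simp [hcdef]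
    have h2 : π₀ (x', p) = (Equiv.swap z0 (F x' p.2) p.1, (x', p.2)) := rfl
    have h3 : c (Equiv.swap z0 (F x' p.2) p.1, (x', p.2))
        = (Equiv.swap z0 (F x' p.2) p.1, e (x', p.2)) := by simp [hcdef]
    show c (π₀ (c.symm (x', e p))) = _
    rw [h1, h2, h3]
  have hq_eval : ∀ p : Fin d × Fin D0,
      q (e p) = if p.1 = z0 then m ((p.2 : Fin D0) : ℕ) else 0 := by
    intro p
    rw [hqdef]
    try dsimp only
    rw [Equiv.symm_apply_apply]
  -- main summation identity
  have hmain : ∀ (x x' : Fin d) (V : Fin (d * D0) → ℝ),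
      (∑ y ∈ Finset.univ.filter (fun y : Fin (d * D0) => (π (x', y)).1 = x),
          V ((π (x', y)).2) * q y)
        = ∑ j : Fin D0, (if F x' j = x then V (e (x', j)) * m ((j : Fin D0) : ℕ) else 0) := by
    intro x x' V
    have step1 : (∑ y ∈ Finset.univ.filter (fun y : Fin (d * D0) => (π (x', y)).1 = x),
          V ((π (x', y)).2) * q y)
        = ∑ y : Fin (d * D0), (if (π (x', y)).1 = x then V ((π (x', y)).2) * q y else 0) :=
      Finset.sum_filter _ _
    have step2 : (∑ y : Fin (d * D0),
          (if (π (x', y)).1 = x then V ((π (x', y)).2) * q y else 0))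
        = ∑ p : Fin d × Fin D0,
            (if (π (x', e p)).1 = x then V ((π (x', e p)).2) * q (e p) else 0) :=
      (Equiv.sum_comp e _).symm
    have step3 : ∀ p : Fin d × Fin D0,
        (if (π (x', e p)).1 = x then V ((π (x', e p)).2) * q (e p) else 0)
          = (if p.1 = z0 then
              (if F x' p.2 = x then V (e (x', p.2)) * m ((p.2 : Fin D0) : ℕ) else 0) else 0) := by
      intro p
      rw [hπ_eval x' p, hq_eval p]
      by_cases hk : p.1 = z0
      · simp [hk, Equiv.swap_apply_left]
      · simp [hk]
    rw [step1, step2]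
    simp only [step3]
    simp only [Fintype.sum_prod_type_right]
    refine Finset.sum_congr rfl ?_
    intro j _
    rw [Finset.sum_ite_eq' Finset.univ z0
      (fun _ => (if F x' j = x then V (e (x', j)) * m ((j : Fin D0) : ℕ) else 0))]
    simp
  -- q facts
  have hq_nonneg : ∀ y, 0 ≤ q y := by
    intro y
    rw [hqdef]
    try dsimp only
    split
    · exact hm_nonneg _
    · exact le_refl 0
  have hq_sum : ∑ y, q y = 1 := by
    have e1 : ∑ y, q y = ∑ p : Fin d × Fin D0, q (e p) := (Equiv.sum_comp e q).symm
    rw [e1]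
    simp only [hq_eval]
    simp only [Fintype.sum_prod_type_right]
    have e3 : ∀ j : Fin D0,
        (∑ k : Fin d, if k = z0 then m ((j : Fin D0) : ℕ) else 0) = m ((j : Fin D0) : ℕ) := by
      intro j
      rw [Finset.sum_ite_eq' Finset.univ z0 (fun _ => m ((j : Fin D0) : ℕ))]
      simp
    simp only [e3]
    rw [Fin.sum_univ_eq_sum_range m D0]
    exact hm_sum
  refine ⟨d * D0, Nat.mul_pos hd0 hD0pos, le_rfl, q, π, hq_nonneg, hq_sum, ?_, ?_⟩
  · -- dilation identity
    intro x x'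
    have h1 : (∑ y' ∈ Finset.univ.filter (fun y' : Fin (d * D0) => (π (x', y')).1 = x), q y')
        = ∑ y' ∈ Finset.univ.filter (fun y' : Fin (d * D0) => (π (x', y')).1 = x),
            (fun _ : Fin (d * D0) => (1:ℝ)) ((π (x', y')).2) * q y' := by
      simp
    rw [h1, hmain x x' (fun _ => 1)]
    simp only [one_mul]
    exact (keyF x x').symm
  · -- instruments
    intro R _ Ar hAr_nonneg hAr_sum
    set τ : R → ℝ := fun r => (∑ x : Fin d, ∑ x3 : Fin d, Ar r x x3) / d with hτdef
    have hτ_nonneg : ∀ r, 0 ≤ τ r := by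
      intro r
      rw [hτdef]
      try dsimp only
      apply div_nonneg _ hdR.le
      apply Finset.sum_nonneg
      intro x _
      exact Finset.sum_nonneg (fun x3 _ => hAr_nonneg r x x3)
    set B : R → Fin (d * D0) → ℝ := fun r y =>
      if 0 < m (((e.symm y).2 : Fin D0) : ℕ)
      then Ar r (F (e.symm y).1 (e.symm y).2) (e.symm y).1
            / A (F (e.symm y).1 (e.symm y).2) (e.symm y).1
      else τ r with hBdef
    have hB_eval : ∀ (r : R) (p : Fin d × Fin D0),
        B r (e p) = if 0 < m ((p.2 : Fin D0) : ℕ)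
          then Ar r (F p.1 p.2) p.1 / A (F p.1 p.2) p.1 else τ r := by
      intro r p
      rw [hBdef]
      try dsimp only
      rw [Equiv.symm_apply_apply]
    have hApos : ∀ (x'' : Fin d) (j : Fin D0), 0 < m ((j : Fin D0) : ℕ) →
        0 < A (F x'' j) x'' := by
      intro x'' j hm
      have hle : m ((j : Fin D0) : ℕ) ≤ A (F x'' j) x'' := by
        rw [← keyF (F x'' j) x'']
        calc m ((j : Fin D0) : ℕ)
            = (if F x'' j = F x'' j then m ((j : Fin D0) : ℕ) else 0) := (if_pos rfl).symm
          _ ≤ ∑ j' : Fin D0, (if F x'' j' = F x'' j then m ((j' : Fin D0) : ℕ) else 0) := by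
              refine Finset.single_le_sum
                (f := fun j' : Fin D0 => if F x'' j' = F x'' j then m ((j' : Fin D0) : ℕ) else 0)
                (fun j' _ => ?_) (Finset.mem_univ j)
              show (0:ℝ) ≤ if F x'' j' = F x'' j then m ((j' : Fin D0) : ℕ) else 0
              split
              · exact hm_nonneg _
              · exact le_refl 0
      linarith
    have hB_nonneg : ∀ r y, 0 ≤ B r y := by
      intro r y
      rw [hBdef]
      try dsimp only
      split
      · exact div_nonneg (hAr_nonneg _ _ _) (hA_nonneg _ _)
      · exact hτ_nonneg r
    have hB_sum : ∀ y, ∑ r, B r y = 1 := by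
      intro y
      obtain ⟨p, rfl⟩ : ∃ p, e p = y := ⟨e.symm y, e.apply_symm_apply y⟩
      simp only [hB_eval]
      by_cases hm : 0 < m ((p.2 : Fin D0) : ℕ)
      · simp only [if_pos hm]
        rw [← Finset.sum_div, hAr_sum]
        exact div_self (ne_of_gt (hApos p.1 p.2 hm))
      · simp only [if_neg hm, hτdef]
        rw [← Finset.sum_div]
        have htot : ∑ r : R, ∑ x : Fin d, ∑ x3 : Fin d, Ar r x x3 = d := by
          rw [Finset.sum_comm]
          have inner : ∀ x : Fin d,
              (∑ r : R, ∑ x3 : Fin d, Ar r x x3) = ∑ x3 : Fin d, A x x3 := by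
            intro x
            rw [Finset.sum_comm]
            exact Finset.sum_congr rfl (fun x3 _ => hAr_sum x x3)
          rw [Finset.sum_congr rfl (fun x _ => inner x), Finset.sum_comm,
            Finset.sum_congr rfl (fun x3 _ => hA_col x3)]
          simp
        rw [htot]
        exact div_self (ne_of_gt hdR)
    refine ⟨B, hB_nonneg, hB_sum, ?_⟩
    intro r x x'
    rw [hmain x x' (B r)]
    by_cases hA0 : A x x' = 0
    · have hz : ∀ j : Fin D0, F x' j = x → m ((j : Fin D0) : ℕ) = 0 := by
        intro j hj
        have hsum0 := keyF x x'
        rw [hA0] at hsum0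
        have hall := (Finset.sum_eq_zero_iff_of_nonneg (fun j' _ => by
          try dsimp only
          split
          · exact hm_nonneg _
          · exact le_refl 0)).mp hsum0 j (Finset.mem_univ j)
        rwa [if_pos hj] at hall
      have hAr0 : Ar r x x' = 0 := by
        have h1 : Ar r x x' ≤ ∑ r' : R, Ar r' x x' :=
          Finset.single_le_sum (fun r' _ => hAr_nonneg r' x x') (Finset.mem_univ r)
        rw [hAr_sum, hA0] at h1
        exact le_antisymm h1 (hAr_nonneg r x x')
      rw [hAr0]
      symm
      apply Finset.sum_eq_zero
      intro j _
      by_cases hj : F x' j = x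
      · rw [if_pos hj, hz j hj, mul_zero]
      · rw [if_neg hj]
    · have hterm : ∀ j : Fin D0,
          (if F x' j = x then B r (e (x', j)) * m ((j : Fin D0) : ℕ) else 0)
            = (Ar r x x' / A x x') * (if F x' j = x then m ((j : Fin D0) : ℕ) else 0) := by
        intro j
        by_cases hj : F x' j = x
        · rw [if_pos hj, if_pos hj, hB_eval r (x', j)]
          try dsimp only
          by_cases hm : 0 < m ((j : Fin D0) : ℕ)
          · rw [if_pos hm, hj]
          · have hm0 : m ((j : Fin D0) : ℕ) = 0 := le_antisymm (not_lt.mp hm) (hm_nonneg _)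
            rw [hm0, mul_zero, mul_zero]
        · rw [if_neg hj, if_neg hj, mul_zero]
      rw [Finset.sum_congr rfl (fun j _ => hterm j), ← Finset.mul_sum, keyF]
      exact (div_mul_cancel₀ _ hA0).symm
end

section
/- Let W and R be finite types, let p : W → ℝ be a probability vector (the joint system–ancilla state before the control operation), let σ be a permutation of W, and let B : R → W → ℝ satisfy B r w ≥ 0 for all r, w and ∑_r B r w = 1 for all w (a bare measurement). Define the unnormalized post-measurement states p̃ r w = B r w · p (σ⁻¹ w) and outcome probabilities P r = ∑_w p̃ r w. Then H(p) ≤ H(r ↦ P r) + ∑_{r : P r > 0} P r · H(w ↦ p̃ r w / P r). In other words, the Shannon entropy of the outcome record plus the average Shannon entropy of the normalized conditional post-states is at least the Shannon entropy of the pre-measurement state; this is the nonnegativity, on average over the last outcome, of the entropy production of an arbitrary control operation. -/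
open Finset

/-- Shannon entropy of a probability vector (with the convention `0 * log 0 = 0`,
which holds since `Real.log 0 = 0`). -/
noncomputable def shannonEntropy {S : Type*} [Fintype S] (p : S → ℝ) : ℝ :=
  -∑ s, p s * Real.log (p s)

/-- Nonnegativity, on average over the last outcome, of the entropy production of
an arbitrary control operation: the entropy of the outcome record plus the average
entropy of the normalized conditional post-states is at least the entropy of the
pre-measurement state. Here the control operation is a permutation `σ` of the joint
system–ancilla space followed by a bare measurement `B`. -/
theorem entropy_production_nonneg {W R : Type*} [Fintype W] [Fintype R]
    (p : W → ℝ) (hp0 : ∀ w, 0 ≤ p w) (hp1 : ∑ w, p w = 1)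
    (σ : Equiv.Perm W)
    (B : R → W → ℝ) (hB0 : ∀ r w, 0 ≤ B r w) (hB1 : ∀ w, ∑ r, B r w = 1) :
    shannonEntropy p ≤
      shannonEntropy (fun r : R => ∑ w, B r w * p (σ.symm w)) +
      ∑ r ∈ univ.filter (fun r : R => 0 < ∑ w, B r w * p (σ.symm w)),
        (∑ w, B r w * p (σ.symm w)) *
          shannonEntropy (fun w : W =>
            (B r w * p (σ.symm w)) / ∑ w', B r w' * p (σ.symm w')) := by
  set q : W → ℝ := fun w => p (σ.symm w) with hqdef
  have hq0 : ∀ w, 0 ≤ q w := fun w => hp0 _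
  set P : R → ℝ := fun r => ∑ w, B r w * q w with hPdef
  have hP0 : ∀ r, 0 ≤ P r := fun r =>
    Finset.sum_nonneg fun w _ => mul_nonneg (hB0 r w) (hq0 w)
  have hzero : ∀ r, P r = 0 → ∀ w, B r w * q w = 0 := by
    intro r hr w
    exact (Finset.sum_eq_zero_iff_of_nonneg
      (fun w _ => mul_nonneg (hB0 r w) (hq0 w))).mp hr w (mem_univ w)
  have hLHS : shannonEntropy p = -∑ r, ∑ w, (B r w * q w) * Real.log (q w) := by
    unfold shannonEntropy
    have h1 : ∑ s, p s * Real.log (p s) = ∑ w, q w * Real.log (q w) :=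
      (Equiv.sum_comp σ.symm (fun w => p w * Real.log (p w))).symm
    rw [h1, Finset.sum_comm]
    congr 1
    apply Finset.sum_congr rfl
    intro w _
    rw [← Finset.sum_mul, ← Finset.sum_mul, hB1 w, one_mul]
  have hr : ∀ r : R, -(P r * Real.log (P r)) +
      (if 0 < P r then P r * shannonEntropy (fun w => (B r w * q w) / P r) else 0)
      = -∑ w, (B r w * q w) * Real.log (B r w * q w) := by
    intro r
    rcases (hP0 r).lt_or_eq with hpos | heq
    · rw [if_pos hpos]
      have hPne : P r ≠ 0 := ne_of_gt hpos
      unfold shannonEntropy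
      rw [mul_neg, Finset.mul_sum]
      have hterm : ∀ w, P r * ((B r w * q w) / P r * Real.log ((B r w * q w) / P r))
          = B r w * q w * Real.log (B r w * q w) - B r w * q w * Real.log (P r) := by
        intro w
        rcases (mul_nonneg (hB0 r w) (hq0 w)).lt_or_eq with h0 | h0
        · rw [Real.log_div (ne_of_gt h0) hPne]
          field_simp
        · rw [← h0]; simp
      rw [Finset.sum_congr rfl (fun w _ => hterm w), Finset.sum_sub_distrib,
        ← Finset.sum_mul]
      have hsum : ∑ w, B r w * q w = P r := rfl
      rw [hsum]
      ring
    · rw [if_neg (by rw [← heq]; exact lt_irrefl 0), ← heq]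
      simp only [zero_mul, neg_zero, add_zero]
      rw [Finset.sum_eq_zero]
      · simp
      · intro w _
        rw [hzero r heq.symm w]
        simp
  have hRHS : shannonEntropy (fun r : R => P r) +
      ∑ r ∈ univ.filter (fun r : R => 0 < P r),
        P r * shannonEntropy (fun w : W => (B r w * q w) / P r)
      = -∑ r, ∑ w, (B r w * q w) * Real.log (B r w * q w) := by
    unfold shannonEntropy
    rw [Finset.sum_filter, ← Finset.sum_neg_distrib, ← Finset.sum_add_distrib,
      ← Finset.sum_neg_distrib]
    apply Finset.sum_congr rfl
    intro r _
    exact hr r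
  rw [hLHS]
  calc (-∑ r, ∑ w, (B r w * q w) * Real.log (q w))
      ≤ -∑ r, ∑ w, (B r w * q w) * Real.log (B r w * q w) := by
        apply neg_le_neg
        apply Finset.sum_le_sum
        intro r _
        apply Finset.sum_le_sum
        intro w _
        rcases (mul_nonneg (hB0 r w) (hq0 w)).lt_or_eq with h0 | h0
        · have hqw : 0 < q w := by
            rcases (hq0 w).lt_or_eq with h | h
            · exact h
            · exfalso; rw [← h, mul_zero] at h0; exact lt_irrefl 0 h0
          have hBle : B r w ≤ 1 := by
            calc B r w ≤ ∑ r', B r' w :=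
              Finset.single_le_sum (fun r' _ => hB0 r' w) (mem_univ r)
            _ = 1 := hB1 w
          have hle : B r w * q w ≤ q w := by
            nlinarith
          exact mul_le_mul_of_nonneg_left (Real.log_le_log h0 hle) (le_of_lt h0)
        · rw [← h0]; simp
    _ = shannonEntropy (fun r : R => P r) +
      ∑ r ∈ univ.filter (fun r : R => 0 < P r),
        P r * shannonEntropy (fun w : W => (B r w * q w) / P r) := hRHS.symm
end

section
/- Let X and Y be finite types, let p : X × Y → ℝ be a probability vector on X × Y, and let T be a column-stochastic matrix on X. Define p' (x, y) = ∑_{x'} T x x' · p (x', y). Then: (i) the Y-marginal is unchanged, ∑_x p' (x, y) = ∑_x p (x, y) for every y; and (ii) the mutual information does not increase, I(p') ≤ I(p), where I(q) = H(x ↦ ∑_y q (x,y)) + H(y ↦ ∑_x q (x,y)) − H(q). That is, a stochastic map acting locally on the system does not change the entropy of the ancilla and can only decrease the system–ancilla correlations. -/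
open Finset

/-- Mutual information of a joint probability vector on `X × Y`. -/
noncomputable def mutualInfo {X Y : Type*} [Fintype X] [Fintype Y] (q : X × Y → ℝ) : ℝ :=
  shannonEntropy (fun x : X => ∑ y, q (x, y)) +
    shannonEntropy (fun y : Y => ∑ x, q (x, y)) - shannonEntropy q

/-!
The mutual information of `p` is the relative entropy of `p` with respect to the product
`p_X ⊗ p_Y` of its marginals. The local map is the column-stochastic matrix `T ⊗ₖ 1`, which
sends `p_X ⊗ p_Y` to `p'_X ⊗ p'_Y` because it fixes the `Y`-marginal. So the claim is the
data-processing inequality for relative entropy, which follows row by row from the log-sum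
inequality.
-/

open Real Matrix
open scoped Kronecker

/-- Meaningful only when `p s > 0` implies `q s > 0`, since `Real.log 0 = 0`. -/
noncomputable def relEntropy {S : Type*} [Fintype S] (p q : S → ℝ) : ℝ :=
  ∑ s, p s * (log (p s) - log (q s))

lemma sub_le_mul_log_sub_log {a c : ℝ} (ha : 0 ≤ a) (hc : 0 ≤ c) (hac : 0 < a → 0 < c) :
    a - c ≤ a * (log a - log c) := by
  rcases ha.eq_or_lt with rfl | ha
  · simpa using hc
  have hc := hac ha
  have h := mul_le_mul_of_nonneg_left (log_le_sub_one_of_pos (div_pos hc ha)) ha.le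
  rw [log_div hc.ne' ha.ne', mul_sub_one, mul_div_cancel₀ _ ha.ne'] at h
  linarith

theorem log_sum_inequality {ι : Type*} [Fintype ι] {a b : ι → ℝ} (ha : ∀ i, 0 ≤ a i)
    (hb : ∀ i, 0 ≤ b i) (hab : ∀ i, 0 < a i → 0 < b i) :
    (∑ i, a i) * (log (∑ i, a i) - log (∑ i, b i)) ≤ ∑ i, a i * (log (a i) - log (b i)) := by
  set A := ∑ i, a i
  set B := ∑ i, b i
  have hA₀ : 0 ≤ A := sum_nonneg fun i _ => ha i
  rcases hA₀.eq_or_lt with hA | hA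
  · rw [← hA, zero_mul]
    refine sum_nonneg fun i _ => ?_
    rw [(sum_eq_zero_iff_of_nonneg fun i _ => ha i).1 hA.symm i (mem_univ i), zero_mul]
  obtain ⟨i₀, -, hi₀⟩ := exists_lt_of_sum_lt (s := univ) (f := fun _ => (0 : ℝ))
    (by simpa using hA)
  have hB : 0 < B := (hab i₀ hi₀).trans_le (single_le_sum (fun i _ => hb i) (mem_univ i₀))
  -- Gibbs' inequality against `b` rescaled to the total mass of `a`.
  have term : ∀ i, a i * (log A - log B) + (a i - b i * (A / B)) ≤
      a i * (log (a i) - log (b i)) := by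
    intro i
    rcases (ha i).eq_or_lt with hai | hai
    · rw [← hai]
      have : 0 ≤ b i * (A / B) := by have := hb i; positivity
      simpa using this
    have hbi := hab i hai
    have h := sub_le_mul_log_sub_log (c := b i * (A / B)) (ha i) (by positivity)
      fun _ => by positivity
    rw [log_mul hbi.ne' (by positivity), log_div hA.ne' hB.ne'] at h
    linarith
  have hsum : ∑ i, (a i * (log A - log B) + (a i - b i * (A / B))) = A * (log A - log B) := by
    rw [sum_add_distrib, sum_sub_distrib, ← sum_mul, ← sum_mul]
    field_simp
    ring
  exact hsum ▸ sum_le_sum fun i _ => term i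

lemma mul_mul_log_sub_log_mul {c a b : ℝ} (hab : a ≠ 0 → b ≠ 0) :
    c * a * (log (c * a) - log (c * b)) = c * (a * (log a - log b)) := by
  rcases eq_or_ne c 0 with rfl | hc
  · simp
  rcases eq_or_ne a 0 with rfl | ha
  · simp
  rw [log_mul hc ha, log_mul hc (hab ha)]
  ring

theorem relEntropy_mulVec_le {n : Type*} [Fintype n] [DecidableEq n] {M : Matrix n n ℝ}
    (hM : M ∈ colStochastic ℝ n) {p q : n → ℝ} (hp : ∀ i, 0 ≤ p i) (hq : ∀ i, 0 ≤ q i)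
    (hpq : ∀ i, 0 < p i → 0 < q i) :
    relEntropy (M *ᵥ p) (M *ᵥ q) ≤ relEntropy p q := by
  have row : ∀ i, (M *ᵥ p) i * (log ((M *ᵥ p) i) - log ((M *ᵥ q) i)) ≤
      ∑ j, M i j * (p j * (log (p j) - log (q j))) := by
    intro i
    have hMij : ∀ j, 0 ≤ M i j := fun j => nonneg_of_mem_colStochastic hM
    have h := log_sum_inequality (a := fun j => M i j * p j) (b := fun j => M i j * q j)
      (fun j => mul_nonneg (hMij j) (hp j)) (fun j => mul_nonneg (hMij j) (hq j))
      fun j hj => mul_pos (pos_of_mul_pos_left hj (hp j))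
        (hpq j (pos_of_mul_pos_right hj (hMij j)))
    refine h.trans_eq (sum_congr rfl fun j _ => mul_mul_log_sub_log_mul fun hpj => ?_)
    exact (hpq j ((hp j).lt_of_ne' hpj)).ne'
  calc relEntropy (M *ᵥ p) (M *ᵥ q)
      ≤ ∑ i, ∑ j, M i j * (p j * (log (p j) - log (q j))) := sum_le_sum fun i _ => row i
    _ = relEntropy p q := by
      rw [sum_comm]
      simp_rw [← sum_mul, sum_col_of_mem_colStochastic hM, one_mul]
      rfl

section Marginals

variable {X Y : Type*} [Fintype X] [Fintype Y]

noncomputable def marginalProduct (q : X × Y → ℝ) : X × Y → ℝ :=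
  fun s => (∑ y, q (s.1, y)) * ∑ x, q (x, s.2)

lemma marginalProduct_nonneg {q : X × Y → ℝ} (hq : ∀ s, 0 ≤ q s) (s : X × Y) :
    0 ≤ marginalProduct q s :=
  mul_nonneg (sum_nonneg fun _ _ => hq _) (sum_nonneg fun _ _ => hq _)

lemma marginals_pos_of_pos {q : X × Y → ℝ} (hq : ∀ s, 0 ≤ q s) {s : X × Y} (hs : 0 < q s) :
    0 < ∑ y, q (s.1, y) ∧ 0 < ∑ x, q (x, s.2) :=
  ⟨hs.trans_le (single_le_sum (f := fun y => q (s.1, y)) (fun _ _ => hq _) (mem_univ s.2)),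
    hs.trans_le (single_le_sum (f := fun x => q (x, s.2)) (fun _ _ => hq _) (mem_univ s.1))⟩

lemma marginalProduct_pos {q : X × Y → ℝ} (hq : ∀ s, 0 ≤ q s) {s : X × Y} (hs : 0 < q s) :
    0 < marginalProduct q s :=
  mul_pos (marginals_pos_of_pos hq hs).1 (marginals_pos_of_pos hq hs).2

theorem mutualInfo_eq_relEntropy {q : X × Y → ℝ} (hq : ∀ s, 0 ≤ q s) :
    mutualInfo q = relEntropy q (marginalProduct q) := by
  have split : ∀ s, q s * log (marginalProduct q s) =
      q s * log (∑ y, q (s.1, y)) + q s * log (∑ x, q (x, s.2)) := by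
    intro s
    rcases (hq s).eq_or_lt with hs | hs
    · rw [← hs]; ring
    obtain ⟨hx, hy⟩ := marginals_pos_of_pos hq hs
    rw [marginalProduct, log_mul hx.ne' hy.ne']
    ring
  have hX : ∑ s, q s * log (∑ y, q (s.1, y)) = ∑ x, (∑ y, q (x, y)) * log (∑ y, q (x, y)) := by
    simp_rw [Fintype.sum_prod_type, ← sum_mul]
  have hY : ∑ s, q s * log (∑ x, q (x, s.2)) = ∑ y, (∑ x, q (x, y)) * log (∑ x, q (x, y)) := by
    simp_rw [Fintype.sum_prod_type, sum_comm (γ := X), ← sum_mul]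
  simp only [relEntropy, mul_sub, sum_sub_distrib, split, sum_add_distrib, hX, hY, mutualInfo,
    shannonEntropy]
  ring

lemma kronecker_one_mulVec_apply {R : Type*} [NonAssocSemiring R] [DecidableEq Y]
    (T : Matrix X X R) (q : X × Y → R) (s : X × Y) :
    ((T ⊗ₖ (1 : Matrix Y Y R)) *ᵥ q) s = ∑ x', T s.1 x' * q (x', s.2) := by
  simp [mulVec, dotProduct, Fintype.sum_prod_type, one_apply]

lemma kronecker_one_mem_colStochastic {R : Type*} [Semiring R] [PartialOrder R]
    [IsOrderedRing R] [DecidableEq X] [DecidableEq Y] {T : Matrix X X R}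
    (hT : T ∈ colStochastic R X) : T ⊗ₖ (1 : Matrix Y Y R) ∈ colStochastic R (X × Y) := by
  rw [mem_colStochastic_iff_sum] at hT ⊢
  refine ⟨fun s t => mul_nonneg (hT.1 _ _) ?_, fun t => ?_⟩
  · rw [one_apply]; split_ifs <;> simp
  · simp [Fintype.sum_prod_type, one_apply, hT.2]

lemma marginalProduct_kronecker_one_mulVec [DecidableEq X] [DecidableEq Y] {T : Matrix X X ℝ}
    (hT : T ∈ colStochastic ℝ X) (q : X × Y → ℝ) :
    marginalProduct ((T ⊗ₖ (1 : Matrix Y Y ℝ)) *ᵥ q) =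
      (T ⊗ₖ (1 : Matrix Y Y ℝ)) *ᵥ marginalProduct q := by
  ext ⟨x, y⟩
  simp only [marginalProduct, kronecker_one_mulVec_apply]
  have hY : ∑ x, ∑ x', T x x' * q (x', y) = ∑ x, q (x, y) :=
    sum_mulVec_of_mem_colStochastic (x := fun x => q (x, y)) hT
  rw [hY, sum_comm, sum_mul]
  refine sum_congr rfl fun x' _ => ?_
  rw [← mul_sum, mul_assoc]

end Marginals

theorem local_stochastic_map_data_processing_general {X Y : Type*} [Fintype X] [Fintype Y]
    (p : X × Y → ℝ) (hp0 : ∀ s, 0 ≤ p s)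
    (T : X → X → ℝ) (hT0 : ∀ x x', 0 ≤ T x x') (hT1 : ∀ x', ∑ x, T x x' = 1) :
    (∀ y : Y, ∑ x, (∑ x', T x x' * p (x', y)) = ∑ x, p (x, y)) ∧
    mutualInfo (fun s : X × Y => ∑ x', T s.1 x' * p (x', s.2)) ≤ mutualInfo p := by
  classical
  have hT : T ∈ colStochastic ℝ X := mem_colStochastic_iff_sum.2 ⟨hT0, hT1⟩
  have hM := kronecker_one_mem_colStochastic (Y := Y) hT
  refine ⟨fun y => sum_mulVec_of_mem_colStochastic (x := fun x => p (x, y)) hT, ?_⟩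
  have hp' : (fun s : X × Y => ∑ x', T s.1 x' * p (x', s.2)) = (T ⊗ₖ 1) *ᵥ p :=
    funext fun s => (kronecker_one_mulVec_apply T p s).symm
  rw [hp', mutualInfo_eq_relEntropy (nonneg_mulVec_of_mem_colStochastic hM hp0),
    mutualInfo_eq_relEntropy hp0, marginalProduct_kronecker_one_mulVec hT]
  exact relEntropy_mulVec_le hM hp0 (marginalProduct_nonneg hp0) fun s => marginalProduct_pos hp0

/-- A stochastic map acting locally on the system does not change the marginal of the
ancilla and can only decrease the system–ancilla mutual information. -/
theorem local_stochastic_map_data_processing {X Y : Type*} [Fintype X] [Fintype Y]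
    (p : X × Y → ℝ) (hp0 : ∀ s, 0 ≤ p s) (hp1 : ∑ s, p s = 1)
    (T : X → X → ℝ) (hT0 : ∀ x x', 0 ≤ T x x') (hT1 : ∀ x', ∑ x, T x x' = 1) :
    (∀ y : Y, ∑ x, (∑ x', T x x' * p (x', y)) = ∑ x, p (x, y)) ∧
    mutualInfo (fun s : X × Y => ∑ x', T s.1 x' * p (x', s.2)) ≤ mutualInfo p :=
  local_stochastic_map_data_processing_general p hp0 T hT0 hT1
end

section
/- Let Γ and R be finite types, P a probability vector on Γ × R, W : Γ → ℝ, and β > 0. Write P_R r = ∑_γ P (γ, r), P_Γ γ = ∑_r P (γ, r), and for P_R r > 0 set W_R r = (∑_γ P (γ, r) · W γ) / P_R r. Assume ∑_γ P_Γ γ · exp(−β W γ) > 0 and ∑_{r : P_R r > 0} P_R r · exp(−β W_R r) > 0, and define the true and estimated free energy differences ΔF = −β⁻¹ · Real.log (∑_γ P_Γ γ · exp(−β W γ)) and ΔF_est = −β⁻¹ · Real.log (∑_{r : P_R r > 0} P_R r · exp(−β W_R r)). Then ΔF_est ≥ ΔF: the free energy difference estimated from the observed work statistics in a Jarzynski-type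 experiment always overestimates the true free energy difference. -/
open Finset

/-! Conditioning the work on a measurement record replaces `W` by its conditional mean on each
record, and Jensen's inequality for the convex map `w ↦ exp (-β w)` shows that this can only
decrease `⟨exp (-β W)⟩`. Since `-β⁻¹ log` is antitone, the estimated free energy difference is
at least the true one. -/

theorem ConvexOn.sum_mul_apply_div_le {ι : Type*} {s : Set ℝ} {f : ℝ → ℝ}
    (hf : ConvexOn ℝ s f) (t : Finset ι) {w x : ι → ℝ} (hw : ∀ i ∈ t, 0 ≤ w i)
    (hx : ∀ i ∈ t, x i ∈ s) :
    (∑ i ∈ t, w i) * f ((∑ i ∈ t, w i * x i) / ∑ i ∈ t, w i) ≤ ∑ i ∈ t, w i * f (x i) := by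
  rcases (sum_nonneg hw).eq_or_lt with hsum | hsum
  · have hw0 : ∀ i ∈ t, w i = 0 := (sum_eq_zero_iff_of_nonneg hw).1 hsum.symm
    rw [← hsum, zero_mul, sum_eq_zero fun i hi => by rw [hw0 i hi, zero_mul]]
  · have hJ := hf.map_centerMass_le hw hsum hx
    simp only [centerMass, smul_eq_mul, Function.comp_apply] at hJ
    rw [inv_mul_eq_div, inv_mul_eq_div, le_div_iff₀' hsum] at hJ
    exact hJ

theorem sum_marginal_mul_apply_condMean_le {Γ R : Type*} [Fintype Γ] [Fintype R]
    {P : Γ × R → ℝ} (hP : ∀ s, 0 ≤ P s) (W : Γ → ℝ) {f : ℝ → ℝ} (hf : ConvexOn ℝ Set.univ f) :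
    ∑ r ∈ univ.filter (fun r : R => 0 < ∑ γ, P (γ, r)),
        (∑ γ, P (γ, r)) * f ((∑ γ, P (γ, r) * W γ) / ∑ γ, P (γ, r))
      ≤ ∑ γ, (∑ r, P (γ, r)) * f (W γ) := by
  have hmarg : ∀ r, 0 ≤ ∑ γ, P (γ, r) := fun r => sum_nonneg fun γ _ => hP _
  calc ∑ r ∈ univ.filter (fun r : R => 0 < ∑ γ, P (γ, r)),
        (∑ γ, P (γ, r)) * f ((∑ γ, P (γ, r) * W γ) / ∑ γ, P (γ, r))
      = ∑ r, (∑ γ, P (γ, r)) * f ((∑ γ, P (γ, r) * W γ) / ∑ γ, P (γ, r)) :=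
        sum_filter_of_ne fun r _ hr => (hmarg r).lt_of_ne (left_ne_zero_of_mul hr).symm
    _ ≤ ∑ r, ∑ γ, P (γ, r) * f (W γ) :=
        sum_le_sum fun r _ =>
          hf.sum_mul_apply_div_le univ (fun γ _ => hP _) fun γ _ => Set.mem_univ _
    _ = ∑ γ, (∑ r, P (γ, r)) * f (W γ) := by
        simp only [sum_mul]
        exact sum_comm

theorem estimated_free_energy_ge_general {Γ R : Type*} [Fintype Γ] [Fintype R]
    (P : Γ × R → ℝ) (hP0 : ∀ s, 0 ≤ P s)
    (W : Γ → ℝ) (β : ℝ) (hβ : 0 < β)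
    (hpos2 : 0 < ∑ r ∈ univ.filter (fun r : R => 0 < ∑ γ, P (γ, r)),
      (∑ γ, P (γ, r)) *
        Real.exp (-β * ((∑ γ, P (γ, r) * W γ) / ∑ γ, P (γ, r)))) :
    -β⁻¹ * Real.log (∑ r ∈ univ.filter (fun r : R => 0 < ∑ γ, P (γ, r)),
        (∑ γ, P (γ, r)) *
          Real.exp (-β * ((∑ γ, P (γ, r) * W γ) / ∑ γ, P (γ, r))))
      ≥ -β⁻¹ * Real.log (∑ γ, (∑ r, P (γ, r)) * Real.exp (-β * W γ)) := by
  have hconvex : ConvexOn ℝ Set.univ fun w : ℝ => Real.exp (-β * w) :=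
    convexOn_exp.comp_linearMap (LinearMap.mulLeft ℝ (-β))
  have hsum := sum_marginal_mul_apply_condMean_le hP0 W hconvex
  rw [ge_iff_le, neg_mul, neg_mul, neg_le_neg_iff]
  exact mul_le_mul_of_nonneg_left (Real.log_le_log hpos2 hsum) (inv_nonneg.2 hβ.le)

/-- The free energy difference estimated from the observed (coarse-grained) work
statistics in a Jarzynski-type experiment always overestimates the true free energy
difference: `ΔF_est ≥ ΔF`. -/
theorem estimated_free_energy_ge {Γ R : Type*} [Fintype Γ] [Fintype R]
    (P : Γ × R → ℝ) (hP0 : ∀ s, 0 ≤ P s) (hP1 : ∑ s, P s = 1)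
    (W : Γ → ℝ) (β : ℝ) (hβ : 0 < β)
    (hpos1 : 0 < ∑ γ, (∑ r, P (γ, r)) * Real.exp (-β * W γ))
    (hpos2 : 0 < ∑ r ∈ univ.filter (fun r : R => 0 < ∑ γ, P (γ, r)),
      (∑ γ, P (γ, r)) *
        Real.exp (-β * ((∑ γ, P (γ, r) * W γ) / ∑ γ, P (γ, r)))) :
    -β⁻¹ * Real.log (∑ r ∈ univ.filter (fun r : R => 0 < ∑ γ, P (γ, r)),
        (∑ γ, P (γ, r)) *
          Real.exp (-β * ((∑ γ, P (γ, r) * W γ) / ∑ γ, P (γ, r))))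
      ≥ -β⁻¹ * Real.log (∑ γ, (∑ r, P (γ, r)) * Real.exp (-β * W γ)) :=
  estimated_free_energy_ge_general P hP0 W β hβ hpos2
end

section
/- Let Γ and R be finite types, P a probability vector on Γ × R, W : Γ → ℝ, and β ≠ 0. With P_R r = ∑_γ P (γ, r), P_Γ γ = ∑_r P (γ, r), and W_R r = (∑_γ P (γ, r) · W γ) / P_R r for P_R r > 0, suppose there exist r ∈ R and γ₁, γ₂ ∈ Γ with P (γ₁, r) > 0, P (γ₂, r) > 0 and W γ₁ ≠ W γ₂ (i.e. the microscopic work is not determined by the measurement record). Then the inequality is strict: ∑_{r : P_R r > 0} P_R r · Real.exp (−β · W_R r) < ∑_γ P_Γ γ · Real.exp (−β · W γ). Hence for β > 0 the estimated free energy difference strictly overestimates the true one, ΔF_est > ΔF. -/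
open Finset

lemma strictConvexOn_exp_neg_mul (β : ℝ) (hβ : β ≠ 0) :
    StrictConvexOn ℝ Set.univ (fun t : ℝ => Real.exp (-β * t)) := by
  refine ⟨convex_univ, ?_⟩
  intro x _ y _ hxy a b ha hb hab
  have hxy' : -β * x ≠ -β * y := by
    intro h
    exact hxy (mul_left_cancel₀ (neg_ne_zero.2 hβ) h)
  have := strictConvexOn_exp.2 (Set.mem_univ (-β * x)) (Set.mem_univ (-β * y)) hxy' ha hb hab
  simp only [smul_eq_mul] at this ⊢
  have harg : -β * (a * x + b * y) = a * (-β * x) + b * (-β * y) := by ring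
  rw [harg]
  exact this

/-- Jensen (non-strict) for weighted averages with unnormalized nonneg weights. -/
lemma jensen_aux {Γ : Type*} [Fintype Γ] (f : ℝ → ℝ) (hf : ConvexOn ℝ Set.univ f)
    (p : Γ → ℝ) (hp : ∀ γ, 0 ≤ p γ) (hq : 0 < ∑ γ, p γ) (W : Γ → ℝ) :
    (∑ γ, p γ) * f ((∑ γ, p γ * W γ) / ∑ γ, p γ) ≤ ∑ γ, p γ * f (W γ) := by
  classical
  set q := ∑ γ, p γ with hqdef
  set t := univ.filter (fun γ : Γ => 0 < p γ) with ht
  have hsum_t : ∀ g : Γ → ℝ, ∑ γ ∈ t, p γ * g γ = ∑ γ, p γ * g γ := by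
    intro g
    refine Finset.sum_subset (subset_univ _) ?_
    intro γ _ hγ
    have : p γ = 0 := by
      by_contra h
      exact hγ (by simp [ht, lt_of_le_of_ne (hp γ) (Ne.symm h)])
    simp [this]
  have hqt : ∑ γ ∈ t, p γ = q := by
    have := hsum_t (fun _ => 1)
    simpa using this
  have hw1 : ∑ γ ∈ t, p γ / q = 1 := by
    rw [← Finset.sum_div, hqt, div_self hq.ne']
  have hjen := hf.map_sum_le (t := t) (w := fun γ => p γ / q) (p := W)
    (fun γ _ => div_nonneg (hp γ) hq.le) hw1 (fun γ _ => Set.mem_univ _)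
  simp only [smul_eq_mul] at hjen
  have h1 : ∑ γ ∈ t, p γ / q * W γ = (∑ γ, p γ * W γ) / q := by
    rw [← hsum_t (fun γ => W γ)]
    rw [Finset.sum_div]
    congr 1; ext γ; ring
  have h2 : ∑ γ ∈ t, p γ / q * f (W γ) = (∑ γ, p γ * f (W γ)) / q := by
    rw [← hsum_t (fun γ => f (W γ))]
    rw [Finset.sum_div]
    congr 1; ext γ; ring
  rw [h1, h2] at hjen
  calc q * f ((∑ γ, p γ * W γ) / q) ≤ q * ((∑ γ, p γ * f (W γ)) / q) := by
        exact mul_le_mul_of_nonneg_left hjen hq.le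
    _ = ∑ γ, p γ * f (W γ) := by field_simp

/-- Strict Jensen for weighted averages with unnormalized nonneg weights. -/
lemma jensen_aux_strict {Γ : Type*} [Fintype Γ] (f : ℝ → ℝ)
    (hf : StrictConvexOn ℝ Set.univ f)
    (p : Γ → ℝ) (hp : ∀ γ, 0 ≤ p γ) (hq : 0 < ∑ γ, p γ) (W : Γ → ℝ)
    (hne : ∃ γ₁ γ₂, 0 < p γ₁ ∧ 0 < p γ₂ ∧ W γ₁ ≠ W γ₂) :
    (∑ γ, p γ) * f ((∑ γ, p γ * W γ) / ∑ γ, p γ) < ∑ γ, p γ * f (W γ) := by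
  classical
  set q := ∑ γ, p γ with hqdef
  set t := univ.filter (fun γ : Γ => 0 < p γ) with ht
  have hsum_t : ∀ g : Γ → ℝ, ∑ γ ∈ t, p γ * g γ = ∑ γ, p γ * g γ := by
    intro g
    refine Finset.sum_subset (subset_univ _) ?_
    intro γ _ hγ
    have : p γ = 0 := by
      by_contra h
      exact hγ (by simp [ht, lt_of_le_of_ne (hp γ) (Ne.symm h)])
    simp [this]
  have hqt : ∑ γ ∈ t, p γ = q := by simpa using hsum_t (fun _ => 1)
  have hw1 : ∑ γ ∈ t, p γ / q = 1 := by
    rw [← Finset.sum_div, hqt, div_self hq.ne']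
  obtain ⟨γ₁, γ₂, h1, h2, hW⟩ := hne
  have hjen := hf.map_sum_lt (t := t) (w := fun γ => p γ / q) (p := W)
    (fun γ hγ => div_pos (by simpa [ht] using hγ) hq)
    hw1 (fun γ _ => Set.mem_univ _)
    ⟨γ₁, by simp [ht, h1], γ₂, by simp [ht, h2], hW⟩
  simp only [smul_eq_mul] at hjen
  have ha : ∑ γ ∈ t, p γ / q * W γ = (∑ γ, p γ * W γ) / q := by
    rw [← hsum_t (fun γ => W γ), Finset.sum_div]
    congr 1; ext γ; ring
  have hb : ∑ γ ∈ t, p γ / q * f (W γ) = (∑ γ, p γ * f (W γ)) / q := by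
    rw [← hsum_t (fun γ => f (W γ)), Finset.sum_div]
    congr 1; ext γ; ring
  rw [ha, hb] at hjen
  calc q * f ((∑ γ, p γ * W γ) / q) < q * ((∑ γ, p γ * f (W γ)) / q) := by
        exact mul_lt_mul_of_pos_left hjen hq
    _ = ∑ γ, p γ * f (W γ) := by field_simp

/-- If the microscopic work is not determined by the measurement record, the
coarse-graining inequality for the exponential work average is strict (strict
convexity of `t ↦ exp(−βt)` for `β ≠ 0`). -/
theorem observed_exp_work_lt {Γ R : Type*} [Fintype Γ] [Fintype R]
    (P : Γ × R → ℝ) (hP0 : ∀ s, 0 ≤ P s) (hP1 : ∑ s, P s = 1)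
    (W : Γ → ℝ) (β : ℝ) (hβ : β ≠ 0)
    (hdeg : ∃ (r : R) (γ₁ γ₂ : Γ),
      0 < P (γ₁, r) ∧ 0 < P (γ₂, r) ∧ W γ₁ ≠ W γ₂) :
    ∑ r ∈ univ.filter (fun r : R => 0 < ∑ γ, P (γ, r)),
      (∑ γ, P (γ, r)) *
        Real.exp (-β * ((∑ γ, P (γ, r) * W γ) / ∑ γ, P (γ, r)))
    < ∑ γ, (∑ r, P (γ, r)) * Real.exp (-β * W γ) := by
  classical
  set f : ℝ → ℝ := fun t => Real.exp (-β * t) with hf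
  have hsc : StrictConvexOn ℝ Set.univ f := strictConvexOn_exp_neg_mul β hβ
  obtain ⟨r₀, γ₁, γ₂, hγ₁, hγ₂, hW⟩ := hdeg
  set S := univ.filter (fun r : R => 0 < ∑ γ, P (γ, r)) with hS
  have hr₀S : r₀ ∈ S := by
    have : 0 < ∑ γ, P (γ, r₀) :=
      lt_of_lt_of_le hγ₁ (Finset.single_le_sum (fun γ _ => hP0 (γ, r₀)) (mem_univ γ₁))
    simp [hS, this]
  -- Rewrite RHS as a sum over r ∈ S
  have hRHS : ∑ γ, (∑ r, P (γ, r)) * f (W γ)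
      = ∑ r ∈ S, ∑ γ, P (γ, r) * f (W γ) := by
    have h1 : ∑ γ, (∑ r, P (γ, r)) * f (W γ)
        = ∑ r, ∑ γ, P (γ, r) * f (W γ) := by
      rw [Finset.sum_comm]
      congr 1; ext γ
      rw [Finset.sum_mul]
    rw [h1]
    symm
    refine Finset.sum_subset (Finset.filter_subset _ _) ?_
    intro r _ hr
    have hq0 : ∑ γ, P (γ, r) = 0 := by
      by_contra h
      have : 0 < ∑ γ, P (γ, r) :=
        lt_of_le_of_ne (Finset.sum_nonneg fun γ _ => hP0 (γ, r)) (Ne.symm h)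
      exact hr (by simp [hS, this])
    have hall : ∀ γ ∈ (univ : Finset Γ), P (γ, r) = 0 :=
      (Finset.sum_eq_zero_iff_of_nonneg (fun γ _ => hP0 (γ, r))).1 hq0
    refine Finset.sum_eq_zero fun γ _ => by rw [hall γ (mem_univ γ)]; ring
  rw [hRHS]
  refine Finset.sum_lt_sum (fun r hr => ?_) ⟨r₀, hr₀S, ?_⟩
  · have hq : 0 < ∑ γ, P (γ, r) := by simpa [hS] using hr
    exact jensen_aux f hsc.convexOn (fun γ => P (γ, r)) (fun γ => hP0 (γ, r)) hq W
  · have hq : 0 < ∑ γ, P (γ, r₀) := by simpa [hS] using hr₀S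
    exact jensen_aux_strict f hsc (fun γ => P (γ, r₀)) (fun γ => hP0 (γ, r₀)) hq W
      ⟨γ₁, γ₂, hγ₁, hγ₂, hW⟩
end

section
/- Every 2×2 column-stochastic real matrix A admits a classical Stinespring dilation with ancilla dimension D = 4: there exist a probability vector q on Fin 4 and a permutation π of Fin 2 × Fin 4 such that for all x, x' ∈ Fin 2: A x x' = ∑_{y' ∈ Fin 4, (π (x', y')).1 = x} q y'. -/
/-!
Let the ancilla be a deterministic channel `f : ι → ι`, drawn with probability
`∏ j, A (f j) j`, i.e. each column's output is sampled independently. Reading off `f x'`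
reproduces `A x x'`, because the remaining factors are column sums equal to `1`. The map
`(x', f) ↦ f x'` has all fibres of size `d ^ d = #(ι → ι)`, so it is the first component of a
permutation of `ι × (ι → ι)`. For `d = 2`, `Fin 2 → Fin 2` is relabelled as `Fin 4`.
-/

open Finset

theorem exists_equiv_prod_fst_eq {α β γ : Type*} [Fintype α] [Fintype γ] [DecidableEq β]
    (φ : α → β) (hφ : ∀ b, Fintype.card {a // φ a = b} = Fintype.card γ) :
    ∃ e : α ≃ β × γ, ∀ a, (e a).1 = φ a :=
  ⟨(Equiv.sigmaFiberEquiv φ).symm.trans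
    ((Equiv.sigmaCongrRight fun b => Fintype.equivOfCardEq (hφ b)).trans
      (Equiv.sigmaEquivProd β γ)), fun _ => rfl⟩

section Fibres

variable {ι : Type*} [Fintype ι] [DecidableEq ι]

theorem sum_filter_apply_eq_prod {κ R : Type*} [Fintype κ] [DecidableEq κ] [CommSemiring R]
    (w : κ → ι → R) (i : ι) (k : κ) :
    ∑ f ∈ univ.filter (fun f : ι → κ => f i = k), ∏ j, w (f j) j =
      w k i * ∏ j ∈ univ.erase i, ∑ y, w y j := by
  rw [← Fintype.piFinset_univ, ← Fintype.piFinset_update_singleton_eq_filter_piFinset_eq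
    (fun _ => univ) i (mem_univ k), ← prod_univ_sum _ (fun j y => w y j),
    ← mul_prod_erase _ _ (mem_univ i)]
  congr 1
  · simp
  · refine prod_congr rfl fun j hj => ?_
    rw [Function.update_of_ne (ne_of_mem_erase hj)]

theorem card_subtype_apply_fst_eq (b : ι) :
    Fintype.card {p : ι × (ι → ι) // p.2 p.1 = b} = Fintype.card (ι → ι) := by
  have : Nonempty ι := ⟨b⟩
  rw [Fintype.card_subtype, card_filter, Fintype.sum_prod_type]
  simp only [← card_filter]
  rw [← Fintype.piFinset_univ]
  simp only [Fintype.card_filter_piFinset_const_eq_of_mem _ _ (mem_univ b)]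
  simp [mul_pow_sub_one Fintype.card_ne_zero]

end Fibres

section Dilation

variable {ι Ω Ω' : Type*} [DecidableEq ι] [Fintype Ω] [Fintype Ω']

def IsClassicalDilation (A : ι → ι → ℝ) (q : Ω → ℝ) (π : Equiv.Perm (ι × Ω)) : Prop :=
  (∀ y, 0 ≤ q y) ∧ ∑ y, q y = 1 ∧
    ∀ x x', A x x' = ∑ y ∈ univ.filter (fun y => (π (x', y)).1 = x), q y

theorem IsClassicalDilation.comp_equiv {A : ι → ι → ℝ} {q : Ω → ℝ} {π : Equiv.Perm (ι × Ω)}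
    (h : IsClassicalDilation A q π) (e : Ω' ≃ Ω) :
    IsClassicalDilation A (q ∘ e)
      (((Equiv.refl ι).prodCongr e).trans (π.trans ((Equiv.refl ι).prodCongr e).symm)) := by
  obtain ⟨hq0, hq1, hA⟩ := h
  refine ⟨fun y => hq0 (e y), by rwa [Function.comp_def, e.sum_comp], fun x x' => ?_⟩
  rw [hA, sum_filter, sum_filter, ← e.sum_comp]
  simp

theorem exists_isClassicalDilation_fun [Fintype ι] (A : ι → ι → ℝ)
    (hA0 : ∀ x x', 0 ≤ A x x') (hA1 : ∀ x', ∑ x, A x x' = 1) :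
    ∃ (q : (ι → ι) → ℝ) (π : Equiv.Perm (ι × (ι → ι))), IsClassicalDilation A q π := by
  obtain ⟨π, hπ⟩ := exists_equiv_prod_fst_eq (fun p : ι × (ι → ι) => p.2 p.1)
    card_subtype_apply_fst_eq
  refine ⟨fun f => ∏ j, A (f j) j, π, fun f => prod_nonneg fun j _ => hA0 _ _, ?_,
    fun x x' => ?_⟩
  · rw [← Fintype.prod_sum (fun j y => A y j)]
    simp [hA1]
  · simp only [hπ, sum_filter_apply_eq_prod, hA1, prod_const_one, mul_one]

end Dilation

/-- Every 2×2 column-stochastic matrix admits a classical Stinespring dilation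
with ancilla dimension `D = 4`. -/
theorem one_bit_channel_stinespring (A : Fin 2 → Fin 2 → ℝ)
    (hA0 : ∀ x x', 0 ≤ A x x') (hA1 : ∀ x', ∑ x, A x x' = 1) :
    ∃ (q : Fin 4 → ℝ) (π : Equiv.Perm (Fin 2 × Fin 4)),
      (∀ y, 0 ≤ q y) ∧ (∑ y, q y = 1) ∧
      ∀ x x' : Fin 2,
        A x x' = ∑ y' ∈ Finset.univ.filter (fun y' : Fin 4 => (π (x', y')).1 = x), q y' := by
  obtain ⟨q, π, h⟩ := exists_isClassicalDilation_fun A hA0 hA1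
  exact ⟨_, _, h.comp_equiv finFunctionFinEquiv.symm⟩
end

section
/- Let d ≥ 2 and let A be a column-stochastic d×d real matrix. Then A admits a classical Stinespring dilation with ancilla dimension D strictly smaller than d(d²−d+1): there exist D with 1 ≤ D < d(d²−d+1), a probability vector q on Fin D, and a permutation π of Fin d × Fin D such that A x x' = ∑_{y' ∈ Fin D, (π (x', y')).1 = x} q y' for all x, x'. In other words, the bound D ≤ d(d²−d+1) of the classical Stinespring theorem is never tight. -/
lemma exists_perm_of_embeddings {α β : Type*} [Fintype α] [Fintype β] [DecidableEq α]
    (ι φ : β ↪ α) : ∃ π : Equiv.Perm α, ∀ b, π (ι b) = φ b := by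
  classical
  let e : {a // a ∈ Set.range ι} ≃ {a // a ∈ Set.range φ} :=
    (Equiv.ofInjective ι ι.injective).symm.trans (Equiv.ofInjective φ φ.injective)
  have hcard : Fintype.card {a // ¬ a ∈ Set.range ι} = Fintype.card {a // ¬ a ∈ Set.range φ} := by
    rw [Fintype.card_subtype_compl, Fintype.card_subtype_compl]
    congr 1
    rw [← Fintype.card_congr (Equiv.ofInjective ι ι.injective),
      ← Fintype.card_congr (Equiv.ofInjective φ φ.injective)]
  let f : {a // ¬ a ∈ Set.range ι} ≃ {a // ¬ a ∈ Set.range φ} := Fintype.equivOfCardEq hcard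
  refine ⟨Equiv.subtypeCongr e f, fun b => ?_⟩
  have h : ι b ∈ Set.range ι := ⟨b, rfl⟩
  have hstep : Equiv.subtypeCongr e f (ι b) = (e ⟨ι b, h⟩ : α) := by
    simp [Equiv.subtypeCongr, h]
  rw [hstep]
  have h2 : e ⟨ι b, h⟩ = Equiv.ofInjective φ φ.injective b := by
    rw [Equiv.trans_apply]
    congr 1
    exact (Equiv.ofInjective ι ι.injective).injective (by simp)
  rw [h2]
  rfl


lemma exists_decomp (d : ℕ) (hd : 2 ≤ d) (A : Fin d → Fin d → ℝ)
    (hA_nonneg : ∀ x x', 0 ≤ A x x')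
    (hA_col : ∀ x', ∑ x, A x x' = 1) :
    ∃ (N : ℕ) (q : Fin N → ℝ) (f : Fin N → Fin d → Fin d),
      1 ≤ N ∧ N ≤ d * (d - 1) + 1 ∧ (∀ j, 0 ≤ q j) ∧ (∑ j, q j = 1) ∧
      (∀ x x', A x x' = ∑ j ∈ Finset.univ.filter (fun j => f j x' = x), q j) ∧
      (2 ≤ N → ∃ c, ∀ (h0 : 0 < N) (h1 : 1 < N), f ⟨0, h0⟩ c ≠ f ⟨1, h1⟩ c) := by
  classical
  set G : Fin d → ℕ → ℝ :=
    fun c k => ∑ i ∈ Finset.univ.filter (fun i : Fin d => i.val < k), A i c with hG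
  have hGmono : ∀ c (k k' : ℕ), k ≤ k' → G c k ≤ G c k' := by
    intro c k k' hk
    refine Finset.sum_le_sum_of_subset_of_nonneg ?_ (fun i _ _ => hA_nonneg i c)
    intro i hi
    simp only [Finset.mem_filter, Finset.mem_univ, true_and] at hi ⊢
    omega
  have hG0 : ∀ c, G c 0 = 0 := by
    intro c
    rw [hG]
    simp
  have hGd : ∀ c (k : ℕ), d ≤ k → G c k = 1 := by
    intro c k hk
    rw [hG]
    dsimp only
    rw [show Finset.univ.filter (fun i : Fin d => i.val < k) = Finset.univ from
      Finset.filter_true_of_mem (fun i _ => lt_of_lt_of_le i.isLt hk)]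
    exact hA_col c
  have hGnonneg : ∀ c (k : ℕ), 0 ≤ G c k :=
    fun c k => Finset.sum_nonneg (fun i _ => hA_nonneg i c)
  have hGle1 : ∀ c (k : ℕ), G c k ≤ 1 := by
    intro c k
    rw [← hA_col c]
    exact Finset.sum_le_sum_of_subset_of_nonneg (Finset.filter_subset _ _)
      (fun i _ _ => hA_nonneg i c)
  set B : Finset ℝ :=
    Finset.image (fun p : Fin d × Fin (d+1) => G p.1 p.2.val) Finset.univ with hB
  have hmemB : ∀ (c : Fin d) (k : ℕ), k ≤ d → G c k ∈ B := by
    intro c k hk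
    rw [hB]
    exact Finset.mem_image.2 ⟨(c, ⟨k, by omega⟩), Finset.mem_univ _, rfl⟩
  have c0 : Fin d := ⟨0, by omega⟩
  have h0B : (0 : ℝ) ∈ B := by rw [← hG0 c0]; exact hmemB c0 0 (by omega)
  have h1B : (1 : ℝ) ∈ B := by rw [← hGd c0 d le_rfl]; exact hmemB c0 d le_rfl
  have hBnonneg : ∀ b ∈ B, (0:ℝ) ≤ b := by
    intro b hb
    rw [hB] at hb
    obtain ⟨p, _, rfl⟩ := Finset.mem_image.1 hb
    exact hGnonneg p.1 p.2.val
  have hBle1 : ∀ b ∈ B, b ≤ (1:ℝ) := by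
    intro b hb
    rw [hB] at hb
    obtain ⟨p, _, rfl⟩ := Finset.mem_image.1 hb
    exact hGle1 p.1 p.2.val
  set M : ℕ := B.card with hM
  have hM2 : 2 ≤ M := by
    rw [hM]
    exact Finset.one_lt_card.2 ⟨0, h0B, 1, h1B, by norm_num⟩
  have hMle : M ≤ d * (d - 1) + 2 := by
    have hsub : B ⊆ insert (0:ℝ) (insert (1:ℝ)
        (Finset.image (fun p : Fin d × Fin (d-1) => G p.1 (p.2.val + 1)) Finset.univ)) := by
      intro b hb
      rw [hB] at hb
      obtain ⟨⟨c, k⟩, _, rfl⟩ := Finset.mem_image.1 hb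
      rcases Nat.eq_zero_or_pos k.val with h0 | h0
      · simp only [Finset.mem_insert]
        left
        rw [h0]
        exact hG0 c
      · rcases Nat.lt_or_ge k.val d with hkd | hkd
        · refine Finset.mem_insert.2 (Or.inr (Finset.mem_insert.2 (Or.inr ?_)))
          refine Finset.mem_image.2 ⟨(c, ⟨k.val - 1, by omega⟩), Finset.mem_univ _, ?_⟩
          dsimp only
          congr 1
          omega
        · refine Finset.mem_insert.2 (Or.inr (Finset.mem_insert.2 (Or.inl ?_)))
          exact hGd c k.val hkd
    calc M ≤ _ := Finset.card_le_card hsub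
    _ ≤ (Finset.image (fun p : Fin d × Fin (d-1) => G p.1 (p.2.val + 1)) Finset.univ).card + 1 + 1 := by
        refine le_trans (Finset.card_insert_le _ _) ?_
        have := Finset.card_insert_le (1:ℝ) (Finset.image (fun p : Fin d × Fin (d-1) => G p.1 (p.2.val + 1)) Finset.univ)
        omega
    _ ≤ d * (d-1) + 2 := by
        have := Finset.card_image_le (s := (Finset.univ : Finset (Fin d × Fin (d-1))))
          (f := fun p : Fin d × Fin (d-1) => G p.1 (p.2.val + 1))
        simp only [Finset.card_univ, Fintype.card_prod, Fintype.card_fin] at this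
        omega
  set e : Fin M ≃o {x // x ∈ B} := B.orderIsoOfFin hM.symm with he
  set t : ℕ → ℝ := fun i => if h : i < M then (e ⟨i, h⟩ : ℝ) else 1 with ht
  have htmem : ∀ i (h : i < M), t i ∈ B := by
    intro i h
    rw [ht]
    dsimp only
    rw [dif_pos h]
    exact (e ⟨i, h⟩).2
  have htmono : ∀ i j : ℕ, i ≤ j → j < M → t i ≤ t j := by
    intro i j hij hj
    rw [ht]
    dsimp only
    rw [dif_pos hj, dif_pos (lt_of_le_of_lt hij hj)]
    exact Subtype.coe_le_coe.2 (e.le_iff_le.2 (by exact hij))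
  have htstrict : ∀ i j : ℕ, i < j → j < M → t i < t j := by
    intro i j hij hj
    rw [ht]
    dsimp only
    rw [dif_pos hj, dif_pos (lt_trans hij hj)]
    exact Subtype.coe_lt_coe.2 (e.lt_iff_lt.2 (by exact hij))
  have hsurj : ∀ b ∈ B, ∃ i : ℕ, ∃ h : i < M, t i = b := by
    intro b hb
    refine ⟨(e.symm ⟨b, hb⟩).val, (e.symm ⟨b, hb⟩).isLt, ?_⟩
    rw [ht]
    dsimp only
    rw [dif_pos (e.symm ⟨b, hb⟩).isLt]
    have : (⟨(e.symm ⟨b, hb⟩).val, (e.symm ⟨b, hb⟩).isLt⟩ : Fin M) = e.symm ⟨b, hb⟩ := rfl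
    rw [this, e.apply_symm_apply]
  have ht0 : t 0 = 0 := by
    obtain ⟨i, hi, hti⟩ := hsurj 0 h0B
    have h1 : t 0 ≤ t i := htmono 0 i (Nat.zero_le i) hi
    have h2 : (0:ℝ) ≤ t 0 := hBnonneg _ (htmem 0 (by omega))
    rw [hti] at h1
    linarith
  have htM1 : t (M - 1) = 1 := by
    obtain ⟨i, hi, hti⟩ := hsurj 1 h1B
    have h1 : t i ≤ t (M-1) := htmono i (M-1) (by omega) (by omega)
    have h2 : t (M-1) ≤ 1 := hBle1 _ (htmem (M-1) (by omega))
    rw [hti] at h1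
    linarith
  set N : ℕ := M - 1 with hN
  have hN1 : 1 ≤ N := by omega
  have htjlt1 : ∀ j : ℕ, j < N → t j < 1 := by
    intro j hj
    rw [← htM1]
    exact htstrict j (M-1) (by omega) (by omega)
  have htj0 : ∀ j : ℕ, j < N → 0 ≤ t j := by
    intro j hj
    rw [← ht0]
    exact htmono 0 j (Nat.zero_le j) (by omega)
  set q : Fin N → ℝ := fun j => t (j.val + 1) - t j.val with hq
  have hqnn : ∀ j : Fin N, 0 ≤ q j := by
    intro j
    have := htmono j.val (j.val+1) (by omega) (by omega)
    rw [hq]; dsimp only; linarith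
  have hqsum : ∑ j, q j = 1 := by
    rw [hq]
    rw [Fin.sum_univ_eq_sum_range (fun n => t (n+1) - t n) N]
    rw [Finset.sum_range_sub t N]
    rw [ht0]
    have : N < M := by omega
    rw [ht]
    dsimp only
    rw [dif_pos this]
    have : (⟨N, this⟩ : Fin M) = ⟨M-1, by omega⟩ := by
      ext; simp [hN]
    rw [this]
    have := htM1
    rw [ht] at this
    dsimp only at this
    rw [dif_pos (show M - 1 < M by omega)] at this
    rw [this]
    ring
  -- construction of f via max'
  have hSne : ∀ (c : Fin d) (j : Fin N),
      (Finset.univ.filter (fun k : Fin (d+1) => G c k.val ≤ t j.val)).Nonempty := by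
    intro c j
    refine ⟨⟨0, by omega⟩, ?_⟩
    simp only [Finset.mem_filter, Finset.mem_univ, true_and]
    rw [hG0]
    exact htj0 j.val j.isLt
  set F : Fin N → Fin d → Fin (d+1) :=
    fun j c => (Finset.univ.filter (fun k : Fin (d+1) => G c k.val ≤ t j.val)).max' (hSne c j)
    with hF
  have hFmem : ∀ j c, G c (F j c).val ≤ t j.val := by
    intro j c
    have := (Finset.univ.filter (fun k : Fin (d+1) => G c k.val ≤ t j.val)).max'_mem (hSne c j)
    simp only [Finset.mem_filter, Finset.mem_univ, true_and] at this
    exact this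
  have hFmax : ∀ j c (k : Fin (d+1)), G c k.val ≤ t j.val → k ≤ F j c := by
    intro j c k hk
    refine Finset.le_max' _ k ?_
    simp only [Finset.mem_filter, Finset.mem_univ, true_and]
    exact hk
  have hFlt : ∀ j c, (F j c).val < d := by
    intro j c
    by_contra h
    have hd' : (F j c).val = d := by have := (F j c).isLt; omega
    have := hFmem j c
    rw [hd', hGd c d le_rfl] at this
    have := htjlt1 j.val j.isLt
    linarith
  set f : Fin N → Fin d → Fin d := fun j c => ⟨(F j c).val, hFlt j c⟩ with hf
  have hf1 : ∀ j c, G c (f j c).val ≤ t j.val := fun j c => hFmem j c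
  have hf2 : ∀ j c, t j.val < G c ((f j c).val + 1) := by
    intro j c
    by_contra h
    push_neg at h
    have := hFmax j c ⟨(F j c).val + 1, by have := hFlt j c; omega⟩ h
    rw [Fin.le_def] at this
    simp at this
  have hfchar : ∀ j c (x : Fin d), G c x.val ≤ t j.val → t j.val < G c (x.val + 1) →
      f j c = x := by
    intro j c x hx1 hx2
    have hle : x.val ≤ (f j c).val := hFmax j c ⟨x.val, by omega⟩ hx1
    by_contra hne
    have hlt : x.val < (f j c).val := by
      rcases Nat.lt_or_ge x.val (f j c).val with h | h
      · exact h
      · exact absurd (Fin.ext (by omega : x.val = (f j c).val)).symm hne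
    have : G c (x.val + 1) ≤ G c (f j c).val := hGmono c _ _ (by omega)
    have := hf1 j c
    linarith
  refine ⟨N, q, f, hN1, by omega, hqnn, hqsum, ?_, ?_⟩
  · -- main identity
    intro x x'
    have haB : G x' x.val ∈ B := hmemB x' x.val (by omega)
    have hbB : G x' (x.val + 1) ∈ B := hmemB x' (x.val + 1) (by omega)
    obtain ⟨a, ha, hta⟩ := hsurj _ haB
    obtain ⟨b, hb, htb⟩ := hsurj _ hbB
    have hab : a ≤ b := by
      by_contra h
      push_neg at h
      have := htstrict b a h ha
      rw [hta, htb] at this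
      have := hGmono x' x.val (x.val + 1) (by omega)
      linarith
    have hbN : b ≤ N := by omega
    have hchar : ∀ j : Fin N, f j x' = x ↔ (a ≤ j.val ∧ j.val < b) := by
      intro j
      constructor
      · intro hfj
        have h1 : G x' x.val ≤ t j.val := by rw [← hfj]; exact hf1 j x'
        have h2 : t j.val < G x' (x.val + 1) := by rw [← hfj]; exact hf2 j x'
        constructor
        · by_contra h
          push_neg at h
          have := htstrict j.val a h ha
          rw [hta] at this
          linarith
        · by_contra h
          push_neg at h
          have := htmono b j.val h (by omega)
          rw [htb] at this
          linarith
      · rintro ⟨h1, h2⟩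
        refine hfchar j x' x ?_ ?_
        · rw [← hta]
          exact htmono a j.val h1 (by omega)
        · rw [← htb]
          exact htstrict j.val b h2 hb
    have hfilter : Finset.univ.filter (fun j : Fin N => f j x' = x)
        = Finset.univ.filter (fun j : Fin N => a ≤ j.val ∧ j.val < b) := by
      ext j
      simp only [Finset.mem_filter, Finset.mem_univ, true_and]
      exact hchar j
    rw [hfilter, hq]
    have hstep : ∑ j ∈ Finset.univ.filter (fun j : Fin N => a ≤ j.val ∧ j.val < b),
        (t (j.val + 1) - t j.val)
        = ∑ n ∈ Finset.Ico a b, (t (n+1) - t n) := by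
      rw [Finset.sum_filter, Fin.sum_univ_eq_sum_range
        (fun n => if a ≤ n ∧ n < b then t (n+1) - t n else 0) N, ← Finset.sum_filter]
      congr 1
      ext n
      simp only [Finset.mem_filter, Finset.mem_range, Finset.mem_Ico]
      omega
    rw [hstep, Finset.sum_Ico_eq_sub _ hab, Finset.sum_range_sub t, Finset.sum_range_sub t,
      hta, htb]
    have hG1 : G x' (x.val + 1) = A x x' + G x' x.val := by
      rw [hG]
      dsimp only
      have hins : Finset.univ.filter (fun i : Fin d => i.val < x.val + 1)
          = insert x (Finset.univ.filter (fun i : Fin d => i.val < x.val)) := by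
        ext i
        simp only [Finset.mem_filter, Finset.mem_univ, true_and, Finset.mem_insert]
        constructor
        · intro h
          rcases Nat.lt_or_ge i.val x.val with h' | h'
          · exact Or.inr h'
          · exact Or.inl (Fin.ext (by omega))
        · rintro (rfl | h)
          · omega
          · omega
      rw [hins, Finset.sum_insert (by simp)]
    rw [hG1]
    ring
  · -- distinctness
    intro h2
    have h1M : 1 < M := by omega
    obtain ⟨p, _, hp⟩ := Finset.mem_image.1 (htmem 1 h1M)
    refine ⟨p.1, fun h0 h1 hcon => ?_⟩
    have ht1pos : 0 < t 1 := by
      rw [← ht0]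
      exact htstrict 0 1 (by omega) h1M
    have hle0 : G p.1 (f ⟨0, h0⟩ p.1).val ≤ t 0 := hf1 ⟨0, h0⟩ p.1
    rw [ht0] at hle0
    have hG0x : G p.1 (f ⟨1, h1⟩ p.1).val = 0 := by
      rw [← hcon]
      exact le_antisymm hle0 (hGnonneg _ _)
    have hlt : t 1 < G p.1 ((f ⟨1, h1⟩ p.1).val + 1) := hf2 ⟨1, h1⟩ p.1
    have hk : p.2.val ≤ (f ⟨1, h1⟩ p.1).val := by
      by_contra h
      push_neg at h
      have := hGmono p.1 ((f ⟨1, h1⟩ p.1).val + 1) p.2.val (by omega)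
      rw [hp] at this
      linarith
    have hfin : G p.1 p.2.val ≤ G p.1 (f ⟨1, h1⟩ p.1).val := hGmono p.1 _ _ hk
    rw [hp, hG0x] at hfin
    linarith

lemma dilation_of_decomp (d N D : ℕ) (A : Fin d → Fin d → ℝ)
    (q : Fin N → ℝ) (f : Fin N → Fin d → Fin d)
    (hq : ∀ j, 0 ≤ q j) (hqs : ∑ j, q j = 1)
    (hA : ∀ x x', A x x' = ∑ j ∈ Finset.univ.filter (fun j => f j x' = x), q j)
    (hND : N ≤ D)
    (hn : ∀ x : Fin d, (Finset.univ.filter (fun p : Fin d × Fin N => f p.2 p.1 = x)).card ≤ D) :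
    ∃ (q' : Fin D → ℝ) (π : Equiv.Perm (Fin d × Fin D)),
      (∀ y, 0 ≤ q' y) ∧ (∑ y, q' y = 1) ∧
      ∀ x x' : Fin d, A x x' =
        ∑ y' ∈ Finset.univ.filter (fun y' : Fin D => (π (x', y')).1 = x), q' y' := by
  classical
  have hσ : ∀ x : Fin d, ({p : Fin d × Fin N // f p.2 p.1 = x} ↪ Fin D) := by
    intro x
    refine Classical.choice (Function.Embedding.nonempty_of_card_le ?_)
    rw [Fintype.card_subtype, Fintype.card_fin]
    exact hn x
  let Φ : (Σ x : Fin d, {p : Fin d × Fin N // f p.2 p.1 = x}) → Fin d × Fin D :=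
    fun s => (s.1, hσ s.1 s.2)
  have hΦinj : Function.Injective Φ := by
    intro s s' h
    have h1 : s.1 = s'.1 := congrArg Prod.fst h
    obtain ⟨x, u⟩ := s; obtain ⟨x', u'⟩ := s'
    dsimp at h1; subst h1
    have h2 : (hσ x) u = (hσ x) u' := congrArg Prod.snd h
    exact congrArg _ ((hσ x).injective h2)
  let toSig : Fin d × Fin N → Σ x : Fin d, {p : Fin d × Fin N // f p.2 p.1 = x} :=
    fun p => ⟨f p.2 p.1, ⟨p, rfl⟩⟩
  have htoSiginj : Function.Injective toSig := by
    intro p p' h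
    exact congrArg (fun s : (Σ x : Fin d, {p : Fin d × Fin N // f p.2 p.1 = x}) => s.2.1) h
  let ψ : Fin d × Fin N → Fin d × Fin D := Φ ∘ toSig
  have hψinj : Function.Injective ψ := hΦinj.comp htoSiginj
  have hψfst : ∀ p : Fin d × Fin N, (ψ p).1 = f p.2 p.1 := fun p => rfl
  let ι : Fin d × Fin N → Fin d × Fin D := fun p => (p.1, Fin.castLE hND p.2)
  have hιinj : Function.Injective ι := by
    intro p p' h
    have h1 := congrArg Prod.fst h
    have h2 := congrArg Prod.snd h
    exact Prod.ext h1 (Fin.castLE_injective hND h2)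
  obtain ⟨π, hπ⟩ := exists_perm_of_embeddings ⟨ι, hιinj⟩ ⟨ψ, hψinj⟩
  have hπ' : ∀ (x' : Fin d) (j : Fin N), (π (x', Fin.castLE hND j)).1 = f j x' := by
    intro x' j
    have := hπ (x', j)
    simp only [Function.Embedding.coeFn_mk] at this
    rw [show ((x' , Fin.castLE hND j) : Fin d × Fin D) = ι (x', j) from rfl, this]
    rfl
  set q' : Fin D → ℝ := fun y => if h : y.val < N then q ⟨y.val, h⟩ else 0 with hq'
  refine ⟨q', π, ?_, ?_, ?_⟩
  · intro y; dsimp only [q']; split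
    · exact hq _
    · exact le_refl 0
  · have h1 : ∑ y : Fin D, q' y = ∑ n ∈ Finset.range D, (fun n : ℕ => if h : n < N then q ⟨n, h⟩ else 0) n := by
      rw [← Fin.sum_univ_eq_sum_range]
    have h2 : ∑ n ∈ Finset.range D, (fun n : ℕ => if h : n < N then q ⟨n, h⟩ else 0) n
        = ∑ n ∈ Finset.range N, (fun n : ℕ => if h : n < N then q ⟨n, h⟩ else 0) n := by
      refine (Finset.sum_subset (Finset.range_subset_range.2 hND) ?_).symm
      intro n _ hn2
      rw [Finset.mem_range] at hn2
      exact dif_neg hn2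
    rw [h1, h2, ← Fin.sum_univ_eq_sum_range, ← hqs]
    refine Finset.sum_congr rfl fun j _ => ?_
    simp
  · intro x x'
    have heq : ∑ y' ∈ Finset.univ.filter (fun y' : Fin D => (π (x', y')).1 = x), q' y'
        = ∑ y' ∈ Finset.univ.filter (fun y' : Fin D => (π (x', y')).1 = x ∧ y'.val < N), q' y' := by
      refine (Finset.sum_subset ?_ ?_).symm
      · intro y' hy'
        simp only [Finset.mem_filter, Finset.mem_univ, true_and] at hy' ⊢
        exact hy'.1
      · intro y' hy' hy2
        simp only [Finset.mem_filter, Finset.mem_univ, true_and] at hy' hy2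
        have hlt : ¬ y'.val < N := fun h => hy2 ⟨hy', h⟩
        exact dif_neg hlt
    have himg : Finset.univ.filter (fun y' : Fin D => (π (x', y')).1 = x ∧ y'.val < N)
        = (Finset.univ.filter (fun j : Fin N => f j x' = x)).image (Fin.castLE hND) := by
      ext y'
      simp only [Finset.mem_filter, Finset.mem_univ, true_and, Finset.mem_image]
      constructor
      · rintro ⟨hc, hlt⟩
        refine ⟨⟨y'.val, hlt⟩, ?_, rfl⟩
        rw [← hc]
        exact (hπ' x' ⟨y'.val, hlt⟩).symm
      · rintro ⟨j, hj, rfl⟩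
        exact ⟨by rw [hπ' x' j]; exact hj, j.isLt⟩
    rw [heq, himg, Finset.sum_image (fun a _ b _ h => Fin.castLE_injective hND h), hA x x']
    refine Finset.sum_congr rfl fun j _ => ?_
    simp [q']


/-- For `d ≥ 2`, every column-stochastic matrix admits a classical Stinespring dilation
with ancilla dimension strictly smaller than `d(d²−d+1)`: the generic bound is never tight. -/
theorem classical_stinespring_strict (d : ℕ) (hd : 2 ≤ d) (A : Fin d → Fin d → ℝ)
    (hA_nonneg : ∀ x x', 0 ≤ A x x')
    (hA_col : ∀ x', ∑ x, A x x' = 1) :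
    ∃ D : ℕ, 1 ≤ D ∧ D < d * (d ^ 2 - d + 1) ∧
      ∃ (q : Fin D → ℝ) (π : Equiv.Perm (Fin d × Fin D)),
        (∀ y, 0 ≤ q y) ∧ (∑ y, q y = 1) ∧
        ∀ x x' : Fin d,
          A x x' = ∑ y' ∈ Finset.univ.filter (fun y' : Fin D => (π (x', y')).1 = x), q y' := by
  classical
  obtain ⟨N, q, f, hN1, hNle, hqnn, hqsum, hA', hdist⟩ := exists_decomp d hd A hA_nonneg hA_col
  have hdd : d * (d - 1) + 1 = d ^ 2 - d + 1 := by
    obtain ⟨e, rfl⟩ : ∃ e, d = e + 1 := ⟨d - 1, by omega⟩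
    have h1 : (e+1) * ((e+1) - 1) = (e+1) ^ 2 - (e+1) := by
      rw [Nat.add_sub_cancel]
      refine (Nat.sub_eq_of_eq_add ?_).symm
      ring
    rw [h1]
  set D : ℕ := max d (d * N - 1) with hD
  have hdN : N ≤ d * N := Nat.le_mul_of_pos_left N (by omega)
  have h1D : 1 ≤ D := le_trans (by omega) (le_max_left _ _)
  have hbig : 3 ≤ d ^ 2 - d + 1 := by
    have : 2 * d ≤ d * d := Nat.mul_le_mul_right d hd
    have hsq : d ^ 2 = d * d := sq d
    omega
  have hDlt : D < d * (d ^ 2 - d + 1) := by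
    rw [hD]
    have hdlt : d < d * (d ^ 2 - d + 1) := by
      have h3 : d * 3 ≤ d * (d ^ 2 - d + 1) := Nat.mul_le_mul_left d hbig
      omega
    refine max_lt hdlt ?_
    have h2 : d * N ≤ d * (d * (d - 1) + 1) := Nat.mul_le_mul_left d hNle
    rw [hdd] at h2
    omega
  have hND : N ≤ D := by
    rcases Nat.lt_or_ge N 2 with h | h
    · refine le_trans (by omega) (le_max_left _ _)
    · refine le_trans ?_ (le_max_right _ _)
      have : 2 * N ≤ d * N := Nat.mul_le_mul_right N hd
      omega
  have hn : ∀ x : Fin d,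
      (Finset.univ.filter (fun p : Fin d × Fin N => f p.2 p.1 = x)).card ≤ D := by
    intro x
    have hle : (Finset.univ.filter (fun p : Fin d × Fin N => f p.2 p.1 = x)).card
        ≤ d * N := by
      calc _ ≤ (Finset.univ : Finset (Fin d × Fin N)).card := Finset.card_filter_le _ _
      _ = d * N := by simp [Finset.card_univ]
    rcases Nat.lt_or_ge N 2 with h | h
    · have hNeq : N = 1 := by omega
      refine le_trans ?_ (le_max_left _ _)
      have hdN1 : d * N = d := by rw [hNeq, mul_one]
      omega
    · obtain ⟨c, hc⟩ := hdist h
      have hne : Finset.univ.filter (fun p : Fin d × Fin N => f p.2 p.1 = x)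
          ≠ Finset.univ := by
        intro hcon
        have h0 : (0 : ℕ) < N := by omega
        have h1 : (1 : ℕ) < N := by omega
        have hm0 : ((c, ⟨0, h0⟩) : Fin d × Fin N) ∈ Finset.univ.filter
            (fun p : Fin d × Fin N => f p.2 p.1 = x) := by rw [hcon]; exact Finset.mem_univ _
        have hm1 : ((c, ⟨1, h1⟩) : Fin d × Fin N) ∈ Finset.univ.filter
            (fun p : Fin d × Fin N => f p.2 p.1 = x) := by rw [hcon]; exact Finset.mem_univ _
        simp only [Finset.mem_filter, Finset.mem_univ, true_and] at hm0 hm1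
        exact hc h0 h1 (hm0.trans hm1.symm)
      have hlt : (Finset.univ.filter (fun p : Fin d × Fin N => f p.2 p.1 = x)).card
          < d * N := by
        have := Finset.card_lt_card (Finset.ssubset_univ_iff.2 hne)
        simpa [Finset.card_univ] using this
      refine le_trans ?_ (le_max_right _ _)
      omega
  obtain ⟨q', π, hq'nn, hq'sum, hfin⟩ :=
    dilation_of_decomp d N D A q f hqnn hqsum hA' hND hn
  exact ⟨D, h1D, hDlt, q', π, hq'nn, hq'sum, hfin⟩
end
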